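/- arXiv:1306.4727 — 10 statements merged into one kernel-verified Lean document; each statement's English description precedes it below -/
import Mathlib

section
/- Let 0 < d_1 ≤ d_2 ≤ … ≤ d_n and 0 ≤ s ≤ Σ_{i=1}^n (d_i − 1) be integers. Define m(a_1,…,a_n) = Π_{i=1}^n (d_i − a_i) for integers 0 ≤ a_i < d_i. Then the minimum of m(a_1,…,a_n) over all tuples with a_1 + ⋯ + a_n ≤ s equals (d_{k+1} − ℓ) · Π_{i=k+2}^n d_i, where k and ℓ are the unique integers with s = Σ_{i=1}^k (d_i − 1) + ℓ and 0 ≤ ℓ < d_{k+1} − 1 (with k = 0 and ℓ = s if s < d_1 − 1, and the empty product equal to 1 if k + 1 = n). -/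
/-!
Lowering the `i`-th factor from `d i` to `d i - a i` costs `a i` of the budget `s`. The greedy
strategy spends the budget on the factors in increasing order of `d i`, lowering each one to `1`
before touching the next; `greedyProd L s` is the product it reaches, and it equals the closed
formula `(d_{k+1} - ℓ) * ∏_{i > k+1} d_i`.

Greedy is optimal by induction on `n`: if a tuple spends `a` on the smallest factor `d`, the
exchange inequality `greedyProd (d :: D) (a + t) ≤ (d - a) * greedyProd D t` says that spending
the budget `a + t` greedily instead is never worse. Depending on whether `a + t` exhausts `d`, it
comes down to `u * e ≤ (u + t) * (e - t)` for `u + t ≤ e`, or to the fact that withholding `r`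
units of budget from the greedy strategy multiplies its value by at most `r + 1` when `r` is
smaller than every factor.
-/

def greedyProd : List ℕ → ℕ → ℕ
  | [], _ => 1
  | d :: L, s => (d - min (d - 1) s) * greedyProd L (s - min (d - 1) s)

theorem greedyProd_zero : ∀ L : List ℕ, greedyProd L 0 = L.prod
  | [] => rfl
  | d :: L => by simp [greedyProd, greedyProd_zero L]

theorem greedyProd_cons_of_lt {d s : ℕ} (L : List ℕ) (h : s < d) :
    greedyProd (d :: L) s = (d - s) * L.prod := by
  rw [greedyProd, min_eq_right (by omega), Nat.sub_self, greedyProd_zero]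

theorem greedyProd_cons_of_le {d s : ℕ} (L : List ℕ) (hd : 0 < d) (h : d - 1 ≤ s) :
    greedyProd (d :: L) s = greedyProd L (s - (d - 1)) := by
  rw [greedyProd, min_eq_left h, Nat.sub_sub_self hd]
  exact Nat.one_mul _

theorem greedyProd_antitone : ∀ L : List ℕ, Antitone (greedyProd L)
  | [] => fun _ _ _ => le_rfl
  | d :: L => fun s t h =>
      Nat.mul_le_mul (by omega) (greedyProd_antitone L (by omega))

theorem mul_prod_le_mul_greedyProd {u t : ℕ} :
    ∀ {L : List ℕ}, (∀ e ∈ L, u + t ≤ e) → u * L.prod ≤ (u + t) * greedyProd L t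
  | [], _ => by simp [greedyProd]
  | e :: L, h => by
      have he := h e List.mem_cons_self
      rcases Nat.eq_zero_or_pos u with rfl | hu
      · simp
      rw [greedyProd_cons_of_lt L (by omega), List.prod_cons, ← mul_assoc, ← mul_assoc]
      refine Nat.mul_le_mul_right _ ?_
      obtain ⟨c, rfl⟩ : ∃ c, e = u + t + c := ⟨e - (u + t), by omega⟩
      rw [show u + t + c - t = u + c by omega]
      nlinarith

theorem greedyProd_sub_le {r : ℕ} :
    ∀ {L : List ℕ} {t : ℕ}, (∀ e ∈ L, r < e) → r ≤ t →
      greedyProd L (t - r) ≤ (r + 1) * greedyProd L t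
  | [], _, _, _ => by simp [greedyProd]
  | e :: L, t, h, hrt => by
      have he := h e List.mem_cons_self
      have hL : ∀ x ∈ L, r < x := fun x hx => h x (List.mem_cons_of_mem e hx)
      rcases lt_or_ge t e with ht | ht
      · rw [greedyProd_cons_of_lt L ht, greedyProd_cons_of_lt L (by omega), ← mul_assoc]
        refine Nat.mul_le_mul_right _ ?_
        obtain ⟨c, rfl⟩ : ∃ c, e = t + 1 + c := ⟨e - (t + 1), by omega⟩
        rw [show t + 1 + c - (t - r) = r + 1 + c by omega, show t + 1 + c - t = 1 + c by omega]
        nlinarith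
      rw [greedyProd_cons_of_le (s := t) L (by omega) (by omega)]
      rcases lt_or_ge (t - r) e with htr | htr
      · rw [greedyProd_cons_of_lt L htr]
        have key := mul_prod_le_mul_greedyProd (u := e - (t - r)) (t := t - (e - 1))
          (L := L) (fun x hx => by have := hL x hx; omega)
        rwa [show e - (t - r) + (t - (e - 1)) = r + 1 by omega] at key
      · rw [greedyProd_cons_of_le L (by omega) (by omega),
          show t - r - (e - 1) = t - (e - 1) - r by omega]
        exact greedyProd_sub_le hL (by omega)

theorem greedyProd_cons_add_le {d a t : ℕ} {D : List ℕ} (ha : a < d) (hD : ∀ e ∈ D, d ≤ e) :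
    greedyProd (d :: D) (a + t) ≤ (d - a) * greedyProd D t := by
  rcases lt_or_ge (a + t) d with h | h
  · rw [greedyProd_cons_of_lt D h]
    have key := mul_prod_le_mul_greedyProd (u := d - (a + t)) (t := t) (L := D)
      (fun e he => by have := hD e he; omega)
    rwa [show d - (a + t) + t = d - a by omega] at key
  · rw [greedyProd_cons_of_le D (by omega) (by omega),
      show a + t - (d - 1) = t - (d - 1 - a) by omega]
    have key := greedyProd_sub_le (r := d - 1 - a) (t := t) (L := D)
      (fun e he => by have := hD e he; omega) (by omega)
    rwa [show d - 1 - a + 1 = d - a by omega] at key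

theorem greedyProd_ofFn_sum_le_prod :
    ∀ {n : ℕ} {d a : Fin n → ℕ}, Monotone d → (∀ i, a i < d i) →
      greedyProd (List.ofFn d) (∑ i, a i) ≤ ∏ i, (d i - a i)
  | 0, _, _, _, _ => by simp [greedyProd]
  | n + 1, d, a, hmono, ha => by
      rw [List.ofFn_succ, Fin.sum_univ_succ, Fin.prod_univ_succ]
      calc greedyProd (d 0 :: List.ofFn fun i => d i.succ) (a 0 + ∑ i : Fin n, a i.succ)
          ≤ (d 0 - a 0) * greedyProd (List.ofFn fun i => d i.succ) (∑ i : Fin n, a i.succ) :=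
            greedyProd_cons_add_le (ha 0) (by
              simp only [List.mem_ofFn, forall_exists_index, forall_apply_eq_imp_iff]
              exact fun i => hmono (Fin.zero_le _))
        _ ≤ (d 0 - a 0) * ∏ i : Fin n, (d i.succ - a i.succ) :=
            Nat.mul_le_mul_left _ <| greedyProd_ofFn_sum_le_prod
              (fun i j hij => hmono (Fin.succ_le_succ_iff.2 hij)) (fun i => ha i.succ)

theorem exists_prod_eq_greedyProd :
    ∀ {n : ℕ} {d : Fin n → ℕ}, (∀ i, 0 < d i) → ∀ s : ℕ,
      ∃ a : Fin n → ℕ, (∀ i, a i < d i) ∧ (∑ i, a i) ≤ s ∧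
        greedyProd (List.ofFn d) s = ∏ i, (d i - a i)
  | 0, _, _, _ => ⟨Fin.elim0, fun i => i.elim0, by simp, by simp [greedyProd]⟩
  | n + 1, d, hd, s => by
      obtain ⟨a, ha, hsum, hprod⟩ :=
        exists_prod_eq_greedyProd (d := fun i => d i.succ) (fun i => hd i.succ)
          (s - min (d 0 - 1) s)
      refine ⟨Fin.cons (min (d 0 - 1) s) a,
        Fin.cases (by simp only [Fin.cons_zero]; have := hd 0; omega) ha, ?_, ?_⟩
      · rw [Fin.sum_univ_succ]
        simp only [Fin.cons_zero, Fin.cons_succ]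
        omega
      · rw [List.ofFn_succ, greedyProd, hprod, Fin.prod_univ_succ]
        simp only [Fin.cons_zero, Fin.cons_succ]

theorem isLeast_greedyProd {n : ℕ} {d : Fin n → ℕ} (hd : ∀ i, 0 < d i) (hmono : Monotone d)
    (s : ℕ) :
    IsLeast {m : ℕ | ∃ a : Fin n → ℕ, (∀ i, a i < d i) ∧ (∑ i : Fin n, a i) ≤ s ∧
        m = ∏ i : Fin n, (d i - a i)} (greedyProd (List.ofFn d) s) := by
  refine ⟨exists_prod_eq_greedyProd hd s, ?_⟩
  rintro m ⟨a, ha, hsum, rfl⟩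
  exact (greedyProd_antitone _ hsum).trans (greedyProd_ofFn_sum_le_prod hmono ha)

theorem greedyProd_ofFn_eq :
    ∀ {n : ℕ} {d : Fin n → ℕ} {k ℓ : ℕ} (hk : k < n), (∀ i, 0 < d i) → ℓ < d ⟨k, hk⟩ →
      greedyProd (List.ofFn d) ((∑ i : Fin n, if (i : ℕ) < k then d i - 1 else 0) + ℓ) =
        (d ⟨k, hk⟩ - ℓ) * ∏ i : Fin n, if k + 1 ≤ (i : ℕ) then d i else 1
  | n + 1, d, 0, ℓ, _, _, hℓ => by
      simp only [Nat.not_lt_zero, if_false, Finset.sum_const_zero, zero_add]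
      rw [List.ofFn_succ, greedyProd_cons_of_lt (d := d 0) _ hℓ, List.prod_ofFn]
      simp [Fin.prod_univ_succ]
  | n + 1, d, k + 1, ℓ, hk, hd, hℓ => by
      have ih := greedyProd_ofFn_eq (d := fun i => d i.succ) (Nat.lt_of_succ_lt_succ hk)
        (fun i => hd i.succ) hℓ
      rw [List.ofFn_succ, Fin.sum_univ_succ, Fin.prod_univ_succ]
      simp only [Fin.val_zero, Fin.val_succ, Nat.zero_lt_succ, if_true, Nat.succ_lt_succ_iff,
        Nat.succ_le_succ_iff, nonpos_iff_eq_zero, Nat.add_one_ne_zero, if_false, one_mul]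
      rw [add_assoc, greedyProd_cons_of_le _ (hd 0) (Nat.le_add_right _ _),
        Nat.add_sub_cancel_left]
      exact ih

theorem stmt0_general (n : ℕ) (d : Fin n → ℕ) (hd : ∀ i, 0 < d i) (hmono : Monotone d)
    (s k ℓ : ℕ) (hk : k < n)
    (hs : s = (∑ i : Fin n, if (i : ℕ) < k then d i - 1 else 0) + ℓ)
    (hℓ : ℓ < d ⟨k, hk⟩ - 1) :
    IsLeast
      {m : ℕ | ∃ a : Fin n → ℕ, (∀ i, a i < d i) ∧ (∑ i : Fin n, a i) ≤ s ∧
        m = ∏ i : Fin n, (d i - a i)}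
      ((d ⟨k, hk⟩ - ℓ) * ∏ i : Fin n, if k + 1 ≤ (i : ℕ) then d i else 1) := by
  rw [← greedyProd_ofFn_eq hk hd (by omega), ← hs]
  exact isLeast_greedyProd hd hmono s

/-- Lemma 1 of the paper: the minimum of `∏ (d i - a i)` over tuples `a` with
`a i < d i` and `∑ a i ≤ s` equals `(d_{k+1} - ℓ) ∏_{i=k+2}^n d i`. -/
theorem stmt0 (n : ℕ) (d : Fin n → ℕ) (hd : ∀ i, 0 < d i) (hmono : Monotone d)
    (s k ℓ : ℕ) (hk : k < n)
    (hstot : s ≤ ∑ i : Fin n, (d i - 1))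
    (hs : s = (∑ i : Fin n, if (i : ℕ) < k then d i - 1 else 0) + ℓ)
    (hℓ : ℓ < d ⟨k, hk⟩ - 1) :
    IsLeast
      {m : ℕ | ∃ a : Fin n → ℕ, (∀ i, a i < d i) ∧ (∑ i : Fin n, a i) ≤ s ∧
        m = ∏ i : Fin n, (d i - a i)}
      ((d ⟨k, hk⟩ - ℓ) * ∏ i : Fin n, if k + 1 ≤ (i : ℕ) then d i else 1) :=
  stmt0_general n d hd hmono s k ℓ hk hs hℓ
end

section
/- Let n ≥ 2 and 2 ≤ s ≤ d_1 ≤ d_2 ≤ … ≤ d_n be integers. Define q(a_1,…,a_n) = Π_{i=1}^n (d_i − a_i) for integers 0 ≤ a_i < s. Then the minimum of q(a_1,…,a_n) over all tuples with a_1 + ⋯ + a_n ≤ s equals (d_1 − (s − 1)) · (d_2 − 1) · Π_{i=3}^n d_i. -/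
section helpers

lemma key_arith (D0 D1 s u v : ℤ) (hs : 2 ≤ s) (hD0 : s ≤ D0) (hD01 : D0 ≤ D1)
    (hu : 0 ≤ u) (hv : 1 ≤ v) (hv' : v ≤ s - 1) (huv : u + v ≤ s) :
    (D0 - (s-1)) * (D1 - 1) ≤ (D0 - u) * (D1 - v) := by
  nlinarith [mul_nonneg (by linarith : (0:ℤ) ≤ D1 - D0) (by linarith : (0:ℤ) ≤ s-1-u),
    mul_nonneg (by linarith : (0:ℤ) ≤ D0 - s) (by linarith : (0:ℤ) ≤ s-u-v),
    mul_nonneg (by linarith : (0:ℤ) ≤ s-u-v) (by linarith : (0:ℤ) ≤ s-1-v),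
    mul_nonneg (by linarith : (0:ℤ) ≤ v-1) (by linarith : (0:ℤ) ≤ s-v-1)]

lemma pairwise_merge (D0 Dj c v : ℕ) (h1 : c + v ≤ D0) (h2 : D0 ≤ Dj) :
    (D0 - (c + v)) * Dj ≤ (D0 - c) * (Dj - v) := by
  have hc : c ≤ D0 := by omega
  have hv : v ≤ Dj := by omega
  zify [h1, hc, hv]
  nlinarith [mul_nonneg (by positivity : (0:ℤ) ≤ (v:ℤ)) (by omega : (0:ℤ) ≤ (Dj:ℤ) - D0 + c)]

lemma merge_lemma {n : ℕ} (d a : Fin n → ℕ) (i0 : Fin n) (hd : ∀ i, d i0 ≤ d i)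
    (T : Finset (Fin n)) (c : ℕ) (hc : c + ∑ i ∈ T, a i ≤ d i0) :
    (d i0 - (c + ∑ i ∈ T, a i)) * ∏ i ∈ T, d i ≤ (d i0 - c) * ∏ i ∈ T, (d i - a i) := by
  induction T using Finset.induction_on generalizing c with
  | empty => simp
  | @insert j T hjT ih =>
    rw [Finset.sum_insert hjT] at hc ⊢
    rw [Finset.prod_insert hjT, Finset.prod_insert hjT]
    calc (d i0 - (c + (a j + ∑ i ∈ T, a i))) * (d j * ∏ i ∈ T, d i)
        = d j * ((d i0 - ((c + a j) + ∑ i ∈ T, a i)) * ∏ i ∈ T, d i) := by ring_nf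
      _ ≤ d j * ((d i0 - (c + a j)) * ∏ i ∈ T, (d i - a i)) := by
          exact Nat.mul_le_mul_left _ (ih (c + a j) (by omega))
      _ = ((d i0 - (c + a j)) * d j) * ∏ i ∈ T, (d i - a i) := by ring
      _ ≤ ((d i0 - c) * (d j - a j)) * ∏ i ∈ T, (d i - a i) := by
          exact Nat.mul_le_mul_right _ (pairwise_merge _ _ _ _ (by omega) (hd j))
      _ = (d i0 - c) * ((d j - a j) * ∏ i ∈ T, (d i - a i)) := by ring

end helpers

/-- Lemma 2 of the paper: minimum of `∏ (d i - a i)` over tuples with `a i < s`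
and `∑ a i ≤ s` equals `(d 1 - (s-1)) (d 2 - 1) ∏_{i=3}^n d i`. -/
theorem stmt1 (n : ℕ) (hn : 2 ≤ n) (d : Fin n → ℕ) (hmono : Monotone d)
    (s : ℕ) (hs2 : 2 ≤ s) (hsd : s ≤ d ⟨0, by omega⟩) :
    IsLeast
      {m : ℕ | ∃ a : Fin n → ℕ, (∀ i, a i < s) ∧ (∑ i : Fin n, a i) ≤ s ∧
        m = ∏ i : Fin n, (d i - a i)}
      ((d ⟨0, by omega⟩ - (s - 1)) * (d ⟨1, by omega⟩ - 1) *
        ∏ i : Fin n, if 2 ≤ (i : ℕ) then d i else 1) := by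
  set i0 : Fin n := ⟨0, by omega⟩ with hi0
  set i1 : Fin n := ⟨1, by omega⟩ with hi1
  have hne01 : i0 ≠ i1 := by simp [hi0, hi1, Fin.ext_iff]
  have hd0 : ∀ i, d i0 ≤ d i := fun i => hmono (by simp [Fin.le_def, hi0])
  have hd01 : d i0 ≤ d i1 := hd0 i1
  set P2 : ℕ := ∏ i : Fin n, if 2 ≤ (i : ℕ) then d i else 1 with hP2
  -- product split identity
  have hsplit : ∏ i : Fin n, d i = d i0 * (d i1 * P2) := by
    have : ∀ i : Fin n, d i =
        (if i = i0 then d i0 else 1) * ((if i = i1 then d i1 else 1) *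
          (if 2 ≤ (i : ℕ) then d i else 1)) := by
      intro i
      rcases i with ⟨iv, hiv⟩
      rcases Nat.lt_or_ge iv 2 with h2 | h2
      · interval_cases iv <;> simp [hi0, hi1, Fin.ext_iff]
      · have h0 : (⟨iv, hiv⟩ : Fin n) ≠ i0 := by simp [hi0, Fin.ext_iff]; omega
        have h1 : (⟨iv, hiv⟩ : Fin n) ≠ i1 := by simp [hi1, Fin.ext_iff]; omega
        simp [h0, h1, h2]
    rw [Finset.prod_congr rfl (fun i _ => this i), Finset.prod_mul_distrib,
      Finset.prod_mul_distrib]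
    simp [hP2]
  constructor
  · -- membership
    refine ⟨fun i => (if i = i0 then s - 1 else 0) + (if i = i1 then 1 else 0), ?_, ?_, ?_⟩
    · intro i
      dsimp only
      split_ifs with h0 h1 h2
      · exact absurd (h0.symm.trans h1) hne01
      all_goals omega
    · rw [Finset.sum_add_distrib]
      simp
      omega
    · have : ∀ i : Fin n, d i - ((if i = i0 then s - 1 else 0) + (if i = i1 then 1 else 0)) =
          (if i = i0 then d i0 - (s-1) else 1) * ((if i = i1 then d i1 - 1 else 1) *
            (if 2 ≤ (i : ℕ) then d i else 1)) := by
        intro i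
        rcases i with ⟨iv, hiv⟩
        rcases Nat.lt_or_ge iv 2 with h2 | h2
        · interval_cases iv <;> simp [hi0, hi1, Fin.ext_iff]
        · have h0 : (⟨iv, hiv⟩ : Fin n) ≠ i0 := by simp [hi0, Fin.ext_iff]; omega
          have h1 : (⟨iv, hiv⟩ : Fin n) ≠ i1 := by simp [hi1, Fin.ext_iff]; omega
          simp [h0, h1, h2]
      rw [Finset.prod_congr rfl (fun i _ => this i), Finset.prod_mul_distrib,
        Finset.prod_mul_distrib]
      simp [hP2, mul_assoc]
  · -- lower bound
    rintro m ⟨a, halt, hsum, rfl⟩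
    have hds : s ≤ d i0 := hsd
    have hd0pos : 0 < d i0 := by omega
    by_cases hex : ∃ j, j ≠ i0 ∧ 1 ≤ a j
    · obtain ⟨j, hj0, hj1⟩ := hex
      have hjv0 : (j : ℕ) ≠ 0 := by
        intro h; exact hj0 (by rw [hi0]; exact Fin.ext h)
      have hji1 : d i1 ≤ d j := by
        refine hmono ?_
        rw [Fin.le_def, hi1]
        show (1 : ℕ) ≤ (j : ℕ)
        omega
      have hjmem : j ∈ Finset.univ.erase i0 := Finset.mem_erase.2 ⟨hj0, Finset.mem_univ j⟩
      -- decompositions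
      have hprodd : ∏ i : Fin n, (d i - a i)
          = (d i0 - a i0) * ((d j - a j) * ∏ i ∈ (Finset.univ.erase i0).erase j, (d i - a i)) := by
        rw [← Finset.mul_prod_erase Finset.univ (fun i => d i - a i) (Finset.mem_univ i0),
          ← Finset.mul_prod_erase (Finset.univ.erase i0) (fun i => d i - a i) hjmem]
      have hsumd : (∑ i : Fin n, a i)
          = a i0 + (a j + ∑ i ∈ (Finset.univ.erase i0).erase j, a i) := by
        rw [← Finset.add_sum_erase Finset.univ a (Finset.mem_univ i0),
          ← Finset.add_sum_erase (Finset.univ.erase i0) a hjmem]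
      have hprodD : d j * ∏ i ∈ (Finset.univ.erase i0).erase j, d i = d i1 * P2 := by
        have h : ∏ i : Fin n, d i
            = d i0 * (d j * ∏ i ∈ (Finset.univ.erase i0).erase j, d i) := by
          rw [← Finset.mul_prod_erase Finset.univ d (Finset.mem_univ i0),
            ← Finset.mul_prod_erase (Finset.univ.erase i0) d hjmem]
        rw [h] at hsplit
        exact (Nat.eq_of_mul_eq_mul_left hd0pos hsplit)
      set u : ℕ := a i0 + ∑ i ∈ (Finset.univ.erase i0).erase j, a i with hu
      have huaj : u + a j ≤ s := by omega
      have hus : u ≤ s - 1 := by omega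
      have hmerge := merge_lemma d a i0 hd0 ((Finset.univ.erase i0).erase j) (a i0) (by omega)
      -- chain
      have step1 : (d j - a j) * ((d i0 - u) * ∏ i ∈ (Finset.univ.erase i0).erase j, d i)
          ≤ ∏ i : Fin n, (d i - a i) := by
        rw [hprodd]
        calc (d j - a j) * ((d i0 - u) * ∏ i ∈ (Finset.univ.erase i0).erase j, d i)
            ≤ (d j - a j) * ((d i0 - a i0) * ∏ i ∈ (Finset.univ.erase i0).erase j, (d i - a i)) :=
              Nat.mul_le_mul_left _ hmerge
          _ = (d i0 - a i0) * ((d j - a j) * ∏ i ∈ (Finset.univ.erase i0).erase j, (d i - a i)) := by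
              ring
      refine le_trans ?_ step1
      -- multiply by d i1
      refine Nat.le_of_mul_le_mul_left ?_ (show 0 < d i1 by omega)
      have key2 : (d i1 - a j) * d j ≤ (d j - a j) * d i1 := by
        have h1 : a j ≤ d i1 := by omega
        have h2 : a j ≤ d j := by omega
        zify [h1, h2]
        nlinarith [mul_nonneg (by positivity : (0:ℤ) ≤ (a j:ℤ))
          (by omega : (0:ℤ) ≤ (d j:ℤ) - d i1)]
      have key1 : (d i0 - (s-1)) * (d i1 - 1) ≤ (d i0 - u) * (d i1 - a j) := by
        have c1 : s - 1 ≤ d i0 := by omega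
        have c2 : u ≤ d i0 := by omega
        have c3 : (1:ℕ) ≤ d i1 := by omega
        have c4 : a j ≤ d i1 := by omega
        zify [c1, c2, c3, c4]
        have := key_arith (d i0) (d i1) s u (a j) (by exact_mod_cast hs2)
          (by exact_mod_cast hds) (by exact_mod_cast hd01) (by positivity)
          (by exact_mod_cast hj1) (by have := halt j; push_cast; omega)
          (by push_cast; omega)
        convert this using 2 <;> push_cast <;> omega
      calc d i1 * ((d i0 - (s-1)) * (d i1 - 1) * P2)
          = ((d i0 - (s-1)) * (d i1 - 1)) * (d i1 * P2) := by ring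
        _ ≤ ((d i0 - u) * (d i1 - a j)) * (d i1 * P2) :=
            Nat.mul_le_mul_right _ key1
        _ = (d i0 - u) * (((d i1 - a j) * d j) * ∏ i ∈ (Finset.univ.erase i0).erase j, d i) := by
            rw [← hprodD]; ring
        _ ≤ (d i0 - u) * (((d j - a j) * d i1) * ∏ i ∈ (Finset.univ.erase i0).erase j, d i) :=
            Nat.mul_le_mul_left _ (Nat.mul_le_mul_right _ key2)
        _ = d i1 * ((d j - a j) * ((d i0 - u) * ∏ i ∈ (Finset.univ.erase i0).erase j, d i)) := by
            ring
    · push_neg at hex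
      have hzero : ∀ i, i ≠ i0 → a i = 0 := by
        intro i hi; have := hex i hi; omega
      have hprodd : ∏ i : Fin n, (d i - a i)
          = (d i0 - a i0) * ∏ i ∈ Finset.univ.erase i0, d i := by
        rw [← Finset.mul_prod_erase Finset.univ (fun i => d i - a i) (Finset.mem_univ i0)]
        congr 1
        refine Finset.prod_congr rfl (fun i hi => ?_)
        rw [hzero i (Finset.mem_erase.1 hi).1, Nat.sub_zero]
      have hprodD : ∏ i ∈ Finset.univ.erase i0, d i = d i1 * P2 := by
        have h : ∏ i : Fin n, d i = d i0 * ∏ i ∈ Finset.univ.erase i0, d i := by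
          rw [← Finset.mul_prod_erase Finset.univ d (Finset.mem_univ i0)]
        rw [h] at hsplit
        exact Nat.eq_of_mul_eq_mul_left hd0pos hsplit
      rw [hprodd, hprodD]
      have h1 : d i0 - (s-1) ≤ d i0 - a i0 := by have := halt i0; omega
      calc (d i0 - (s-1)) * (d i1 - 1) * P2
          = (d i0 - (s-1)) * ((d i1 - 1) * P2) := by ring
        _ ≤ (d i0 - a i0) * (d i1 * P2) :=
            Nat.mul_le_mul h1 (Nat.mul_le_mul_right _ (Nat.sub_le _ _))
end

section
/- Let 0 < d_1 ≤ ⋯ ≤ d_n and let (a_1,…,a_n) with 0 ≤ a_i < d_i satisfy a_{i1} < d_{i1} − 1 for some index i1, and suppose there is i2 > i1 with a_{i2} > 0 and a_{i1} + a_{i2} ≤ d_{i1} − 1. Let a' be obtained from a by replacing a_{i1} by a_{i1} + a_{i2} and a_{i2} by 0. Then Π_i (d_i − a'_i) ≤ Π_i (d_i − a_i), with strict inequality if a_{i1} > 0. -/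
/-!
Only the factors at `i1` and `i2` change. With `d₁ = d i1 ≤ d₂ = d i2` and `a₁ = a i1`,
`a₂ = a i2`, the old pair of factors exceeds the new one by
`(d₂ - a₂)(d₁ - a₁) - d₂ (d₁ - a₁ - a₂) = a₂ (a₁ + d₂ - d₁) ≥ 0`,
which is positive as soon as `a₁, a₂ > 0`; the remaining factors are common to both products.
-/

namespace Finset

variable {ι : Type*} [DecidableEq ι] {s : Finset ι} {i j : ι}

theorem prod_eq_mul_mul_prod_erase_erase {M : Type*} [CommMonoid M] (hi : i ∈ s) (hj : j ∈ s)
    (hij : i ≠ j) (f : ι → M) :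
    ∏ k ∈ s, f k = f i * f j * ∏ k ∈ (s.erase i).erase j, f k := by
  rw [mul_assoc, mul_prod_erase _ _ (mem_erase.2 ⟨hij.symm, hj⟩), mul_prod_erase _ _ hi]

theorem prod_erase_erase_congr {M : Type*} [CommMonoid M] {f g : ι → M}
    (heq : ∀ k ∈ s, k ≠ i → k ≠ j → f k = g k) :
    ∏ k ∈ (s.erase i).erase j, f k = ∏ k ∈ (s.erase i).erase j, g k :=
  prod_congr rfl fun k hk => by
    simp only [mem_erase] at hk
    exact heq k hk.2.2 hk.2.1 hk.1

variable {R : Type*} [CommSemiring R] [PartialOrder R] {f g : ι → R}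

theorem prod_le_prod_of_eq_off_pair [IsOrderedRing R] (hi : i ∈ s) (hj : j ∈ s) (hij : i ≠ j)
    (heq : ∀ k ∈ s, k ≠ i → k ≠ j → f k = g k) (hg : ∀ k ∈ s, k ≠ i → k ≠ j → 0 ≤ g k)
    (hpair : f i * f j ≤ g i * g j) :
    ∏ k ∈ s, f k ≤ ∏ k ∈ s, g k := by
  rw [prod_eq_mul_mul_prod_erase_erase hi hj hij, prod_eq_mul_mul_prod_erase_erase hi hj hij,
    prod_erase_erase_congr heq]
  refine mul_le_mul_of_nonneg_right hpair (prod_nonneg fun k hk => by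
    simp only [mem_erase] at hk
    exact hg k hk.2.2 hk.2.1 hk.1)

theorem prod_lt_prod_of_eq_off_pair [IsStrictOrderedRing R] (hi : i ∈ s) (hj : j ∈ s)
    (hij : i ≠ j) (heq : ∀ k ∈ s, k ≠ i → k ≠ j → f k = g k)
    (hg : ∀ k ∈ s, k ≠ i → k ≠ j → 0 < g k) (hpair : f i * f j < g i * g j) :
    ∏ k ∈ s, f k < ∏ k ∈ s, g k := by
  rw [prod_eq_mul_mul_prod_erase_erase hi hj hij, prod_eq_mul_mul_prod_erase_erase hi hj hij,
    prod_erase_erase_congr heq]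
  refine mul_lt_mul_of_pos_right hpair (prod_pos fun k hk => by
    simp only [mem_erase] at hk
    exact hg k hk.2.2 hk.2.1 hk.1)

end Finset

section Exchange

variable {d₁ d₂ a₁ a₂ : ℕ}

theorem sub_add_mul_add_mul_eq (hd : d₁ ≤ d₂) (hs : a₁ + a₂ ≤ d₁) :
    (d₁ - (a₁ + a₂)) * d₂ + a₂ * (a₁ + (d₂ - d₁)) = (d₁ - a₁) * (d₂ - a₂) := by
  zify [hd, hs, (le_self_add : a₁ ≤ a₁ + a₂).trans hs, le_add_self.trans (hs.trans hd)]
  ring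

theorem sub_add_mul_le (hd : d₁ ≤ d₂) (hs : a₁ + a₂ ≤ d₁) :
    (d₁ - (a₁ + a₂)) * d₂ ≤ (d₁ - a₁) * (d₂ - a₂) :=
  Nat.le.intro (sub_add_mul_add_mul_eq hd hs)

theorem sub_add_mul_lt (hd : d₁ ≤ d₂) (hs : a₁ + a₂ ≤ d₁) (h₁ : 0 < a₁) (h₂ : 0 < a₂) :
    (d₁ - (a₁ + a₂)) * d₂ < (d₁ - a₁) * (d₂ - a₂) := by
  rw [← sub_add_mul_add_mul_eq hd hs]
  exact Nat.lt_add_of_pos_right (Nat.mul_pos h₂ (Nat.add_pos_left h₁ _))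

end Exchange

theorem stmt2_general (n : ℕ) (d a : Fin n → ℕ) (hmono : Monotone d)
    (ha : ∀ i, a i < d i) (i1 i2 : Fin n) (h12 : i1 < i2)
    (h2 : 0 < a i2) (hsum : a i1 + a i2 ≤ d i1 - 1) :
    (∏ i : Fin n, (d i - (fun i => if i = i1 then a i1 + a i2 else
        if i = i2 then 0 else a i) i)) ≤ ∏ i : Fin n, (d i - a i) ∧
    (0 < a i1 →
      (∏ i : Fin n, (d i - (fun i => if i = i1 then a i1 + a i2 else
        if i = i2 then 0 else a i) i)) < ∏ i : Fin n, (d i - a i)) := by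
  have hne : i1 ≠ i2 := h12.ne
  have hd : d i1 ≤ d i2 := hmono h12.le
  have hs : a i1 + a i2 ≤ d i1 := hsum.trans (Nat.sub_le _ _)
  have heq : ∀ k ∈ Finset.univ, k ≠ i1 → k ≠ i2 →
      d k - (if k = i1 then a i1 + a i2 else if k = i2 then 0 else a k) = d k - a k := by
    intro k _ hk1 hk2
    rw [if_neg hk1, if_neg hk2]
  have hpair : (d i1 - (if i1 = i1 then a i1 + a i2 else if i1 = i2 then 0 else a i1)) *
      (d i2 - (if i2 = i1 then a i1 + a i2 else if i2 = i2 then 0 else a i2)) =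
      (d i1 - (a i1 + a i2)) * d i2 := by
    rw [if_pos rfl, if_neg hne.symm, if_pos rfl, Nat.sub_zero]
  refine ⟨Finset.prod_le_prod_of_eq_off_pair (Finset.mem_univ _) (Finset.mem_univ _) hne heq
    (fun _ _ _ _ => Nat.zero_le _) (hpair ▸ sub_add_mul_le hd hs), fun h1 => ?_⟩
  exact Finset.prod_lt_prod_of_eq_off_pair (Finset.mem_univ _) (Finset.mem_univ _) hne heq
    (fun k _ _ _ => Nat.sub_pos_of_lt (ha k)) (hpair ▸ sub_add_mul_lt hd hs h1 h2)

/-- The first exchange step in the proof of Lemma 1: moving `a i2` onto `a i1`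
does not increase the product `∏ (d i - a i)`, strictly if `a i1 > 0`. -/
theorem stmt2 (n : ℕ) (d a : Fin n → ℕ) (hd : ∀ i, 0 < d i) (hmono : Monotone d)
    (ha : ∀ i, a i < d i) (i1 i2 : Fin n) (h12 : i1 < i2)
    (h1 : a i1 < d i1 - 1) (h2 : 0 < a i2) (hsum : a i1 + a i2 ≤ d i1 - 1) :
    (∏ i : Fin n, (d i - (fun i => if i = i1 then a i1 + a i2 else
        if i = i2 then 0 else a i) i)) ≤ ∏ i : Fin n, (d i - a i) ∧
    (0 < a i1 →
      (∏ i : Fin n, (d i - (fun i => if i = i1 then a i1 + a i2 else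
        if i = i2 then 0 else a i) i)) < ∏ i : Fin n, (d i - a i)) :=
  stmt2_general n d a hmono ha i1 i2 h12 h2 hsum
end

section
/- Let F_q be a finite field, let A_1, …, A_n be nonempty subsets of F_q, and let f_i = Π_{c ∈ A_i} (X_i − c) for each i. Then the ideal I = (f_1, …, f_n) in F_q[X_1,…,X_n] is a radical ideal. -/
open MvPolynomial

set_option maxHeartbeats 1000000
set_option synthInstance.maxHeartbeats 400000

universe u

section Aux

/-- Reduction of an exponent modulo the relation `x^q = x`. -/
def redExp (q d : ℕ) : ℕ := if d = 0 then 0 else (d - 1) % (q - 1) + 1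

lemma redExp_zero (q : ℕ) : redExp q 0 = 0 := rfl

lemma redExp_le {q : ℕ} (hq : 2 ≤ q) (d : ℕ) : redExp q d ≤ q - 1 := by
  unfold redExp
  split
  · omega
  · have := Nat.mod_lt (d - 1) (show 0 < q - 1 by omega)
    omega

lemma pow_redExp {M : Type*} [Monoid M] {q : ℕ} (hq : 2 ≤ q) {x : M} (hx : x ^ q = x) (d : ℕ) :
    x ^ d = x ^ redExp q d := by
  induction d using Nat.strong_induction_on with
  | _ d ih =>
    by_cases hd : d < q
    · congr 1
      unfold redExp
      split
      · omega
      · have h2 : d - 1 < q - 1 := by omega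
        rw [Nat.mod_eq_of_lt h2]
        omega
    · push_neg at hd
      have h1 : x ^ d = x ^ (d - (q - 1)) := by
        have hdq : d = (d - q) + q := by omega
        rw [hdq, pow_add, hx, ← pow_succ]
        congr 1
        omega
      rw [h1, ih _ (by omega)]
      congr 1
      unfold redExp
      have hd0 : ¬ (d - (q-1) = 0) := by omega
      have hd1 : ¬ (d = 0) := by omega
      rw [if_neg hd0, if_neg hd1]
      have h3 : d - 1 = (d - (q-1) - 1) + (q - 1) := by omega
      rw [h3, Nat.add_mod_right]

end Aux

section Grid

variable {F : Type u} [Field F] [Fintype F] {n : ℕ}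

/-- universe-flexible version of `MvPolynomial.eq_zero_of_eval_eq_zero`. -/
lemma eval_zero_lemma (p : MvPolynomial (Fin n) F)
    (h : ∀ v : Fin n → F, eval v p = 0)
    (hp : p ∈ restrictDegree (Fin n) F (Fintype.card F - 1)) : p = 0 := by
  classical
  let e : Fin n ≃ ULift.{u} (Fin n) := Equiv.ulift.symm
  have hinj := rename_injective (R := F) (e : Fin n → ULift.{u} (Fin n)) e.injective
  apply hinj
  rw [map_zero]
  apply eq_zero_of_eval_eq_zero (ULift.{u} (Fin n)) F
  · intro v
    rw [eval_rename]
    exact h _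
  · rw [mem_restrictDegree] at hp ⊢
    intro s hs i
    rw [support_rename_of_injective e.injective, Finset.mem_image] at hs
    obtain ⟨s₀, hs₀, rfl⟩ := hs
    have : i = e (e.symm i) := (e.apply_symm_apply i).symm
    rw [this, Finsupp.mapDomain_apply e.injective]
    exact hp s₀ hs₀ _

/-- The span of the `X i ^ q - X i`. -/
noncomputable def fieldEqIdeal (F : Type u) [Field F] [Fintype F] (n : ℕ) :
    Ideal (MvPolynomial (Fin n) F) :=
  Ideal.span (Set.range fun i : Fin n => (X i : MvPolynomial (Fin n) F) ^ Fintype.card F - X i)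

lemma mem_fieldEqIdeal_of_eval_eq_zero (p : MvPolynomial (Fin n) F)
    (h : ∀ v : Fin n → F, eval v p = 0) : p ∈ fieldEqIdeal F n := by
  classical
  have hq : 2 ≤ Fintype.card F := Fintype.one_lt_card
  set J := fieldEqIdeal F n with hJ
  -- the reduced polynomial
  set r : MvPolynomial (Fin n) F :=
    ∑ m ∈ p.support, monomial (Finsupp.mapRange (redExp (Fintype.card F)) (redExp_zero (Fintype.card F)) m) (coeff m p) with hr
  have hXq : ∀ i : Fin n, (Ideal.Quotient.mk J (X i)) ^ Fintype.card F = Ideal.Quotient.mk J (X i) := by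
    intro i
    rw [← map_pow, Ideal.Quotient.eq]
    exact Ideal.subset_span ⟨i, rfl⟩
  have hmk : Ideal.Quotient.mk J p = Ideal.Quotient.mk J r := by
    conv_lhs => rw [(p.support_sum_monomial_coeff).symm]
    rw [hr, map_sum (Ideal.Quotient.mk J), map_sum (Ideal.Quotient.mk J)]
    refine Finset.sum_congr rfl fun m hm => ?_
    rw [monomial_eq, monomial_eq, Finsupp.prod_pow, Finsupp.prod_pow, map_mul, map_mul,
      map_prod, map_prod]
    congr 1
    refine Finset.prod_congr rfl fun i _ => ?_
    rw [map_pow, map_pow, pow_redExp hq (hXq i) (m i), Finsupp.mapRange_apply]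
  have hrdeg : r ∈ restrictDegree (Fin n) F (Fintype.card F - 1) := by
    rw [hr]
    refine Submodule.sum_mem _ fun m hm => ?_
    rw [mem_restrictDegree]
    intro s hs i
    have := support_monomial_subset hs
    rw [Finset.mem_singleton] at this
    subst this
    rw [Finsupp.mapRange_apply]
    exact redExp_le hq _
  have hpr : p - r ∈ J := Ideal.Quotient.eq.mp hmk
  have hJker : ∀ v : Fin n → F, ∀ x ∈ J, eval v x = 0 := by
    intro v x hx
    have hle : J ≤ RingHom.ker (eval v) := by
      rw [hJ, fieldEqIdeal, Ideal.span_le]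
      rintro _ ⟨i, rfl⟩
      simp [RingHom.mem_ker, FiniteField.pow_card]
    exact hle hx
  have hrz : r = 0 := by
    apply eval_zero_lemma r _ hrdeg
    intro v
    have h1 : eval v (p - r) = 0 := hJker v _ hpr
    have h2 := h v
    rw [map_sub, h2, zero_sub, neg_eq_zero] at h1
    exact h1
  rw [← sub_zero p, ← hrz]
  exact hpr

/-- The evaluation ring hom into the function ring. -/
noncomputable def evalHom (F : Type u) [Field F] [Fintype F] (n : ℕ) :
    MvPolynomial (Fin n) F →+* ((Fin n → F) → F) :=
  Pi.ringHom fun v => (eval v : MvPolynomial (Fin n) F →+* F)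

lemma evalHom_surjective : Function.Surjective (evalHom F n) := by
  intro e
  have h := map_restrict_dom_evalₗ F (Fin n)
  have he : e ∈ (⊤ : Submodule F ((Fin n → F) → F)) := trivial
  rw [← h] at he
  obtain ⟨p, -, hp⟩ := Submodule.mem_map.mp he
  exact ⟨p, hp⟩

lemma ker_evalHom : RingHom.ker (evalHom F n) = fieldEqIdeal F n := by
  apply le_antisymm
  · intro p hp
    rw [RingHom.mem_ker] at hp
    exact mem_fieldEqIdeal_of_eval_eq_zero p fun v => congrFun hp v
  · rw [fieldEqIdeal, Ideal.span_le]
    rintro _ ⟨i, rfl⟩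
    rw [SetLike.mem_coe, RingHom.mem_ker]
    funext v
    show eval v ((X i : MvPolynomial (Fin n) F) ^ Fintype.card F - X i) = 0
    rw [map_sub, map_pow, eval_X, FiniteField.pow_card, sub_self]

/-- Every ideal in a ring of functions into a field is radical. -/
lemma pi_ideal_isRadical {S : Type*} {K : Type*} [Field K] (I : Ideal (S → K)) :
    I.IsRadical := by
  intro g hg
  obtain ⟨k, hk⟩ := hg
  classical
  rcases Nat.eq_zero_or_pos k with hk0 | hkpos
  · subst hk0
    rw [pow_zero] at hk
    exact (Ideal.eq_top_iff_one I).mpr hk ▸ Submodule.mem_top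
  · have hg' : g = (fun x => if g x = 0 then 0 else (g x ^ (k - 1))⁻¹) * g ^ k := by
      funext x
      by_cases hx : g x = 0
      · simp [hx, Pi.mul_apply, Pi.pow_apply, zero_pow (show k ≠ 0 by omega)]
      · simp only [Pi.mul_apply, Pi.pow_apply, if_neg hx]
        have hgk : g x ^ k = g x ^ (k - 1) * g x := by
          rw [← pow_succ]; congr 1; omega
        rw [hgk, ← mul_assoc, inv_mul_cancel₀ (pow_ne_zero _ hx), one_mul]
    rw [hg']
    exact Ideal.mul_mem_left _ _ hk

end Grid

/-- The ideal `I = (f_1, …, f_n)` with `f_i = ∏_{c ∈ A_i} (X_i - c)` is radical. -/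
theorem stmt4 (F : Type*) [Field F] [Fintype F] (n : ℕ)
    (A : Fin n → Finset F) (hA : ∀ i, (A i).Nonempty) :
    (Ideal.span (Set.range fun i : Fin n =>
      ∏ c ∈ A i, (X i - C c : MvPolynomial (Fin n) F))).IsRadical := by
  classical
  set I : Ideal (MvPolynomial (Fin n) F) := Ideal.span (Set.range fun i : Fin n =>
      ∏ c ∈ A i, (X i - C c : MvPolynomial (Fin n) F)) with hI
  -- The field-equation ideal is contained in I
  have hJI : fieldEqIdeal F n ≤ I := by
    rw [fieldEqIdeal, Ideal.span_le]
    rintro _ ⟨i, rfl⟩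
    -- divisibility in Polynomial F, transported by aeval (X i)
    have hdvd1 : (∏ c : F, (Polynomial.X - Polynomial.C c)) ∣
        (Polynomial.X ^ Fintype.card F - Polynomial.X : Polynomial F) := by
      have h := Polynomial.prod_multiset_X_sub_C_dvd
        (Polynomial.X ^ Fintype.card F - Polynomial.X : Polynomial F)
      rw [FiniteField.roots_X_pow_card_sub_X] at h
      rw [show (∏ c : F, (Polynomial.X - Polynomial.C c)) =
        ((Finset.univ.val : Multiset F).map fun c => Polynomial.X - Polynomial.C c).prod from rfl]
      exact h
    have hdvd2 : (∏ c ∈ A i, (Polynomial.X - Polynomial.C c)) ∣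
        (∏ c : F, (Polynomial.X - Polynomial.C c)) :=
      Finset.prod_dvd_prod_of_subset _ _ _ (Finset.subset_univ (A i))
    have hdvd := hdvd2.trans hdvd1
    have hdvd' := map_dvd (Polynomial.aeval (X i : MvPolynomial (Fin n) F)) hdvd
    simp only [map_prod, map_sub, map_pow, Polynomial.aeval_X, Polynomial.aeval_C,
      algebraMap_eq] at hdvd'
    obtain ⟨g, hg⟩ := hdvd'
    show (X i : MvPolynomial (Fin n) F) ^ Fintype.card F - X i ∈ I
    rw [hg]
    exact Ideal.mul_mem_right _ _ (Ideal.subset_span ⟨i, rfl⟩)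
  -- now conclude radicality
  intro p hp
  obtain ⟨k, hk⟩ := hp
  have hmem : evalHom F n p ∈ (I.map (evalHom F n)).radical := by
    refine ⟨k, ?_⟩
    rw [← map_pow]
    exact Ideal.mem_map_of_mem _ hk
  have h2 : evalHom F n p ∈ I.map (evalHom F n) := pi_ideal_isRadical _ hmem
  have h3 : p ∈ Ideal.comap (evalHom F n) (I.map (evalHom F n)) := h2
  rw [Ideal.comap_map_of_surjective (evalHom F n) evalHom_surjective] at h3
  have h4 : Ideal.comap (evalHom F n) ⊥ ≤ I := by
    rw [← RingHom.ker_eq_comap_bot, ker_evalHom]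
    exact hJI
  exact (sup_le le_rfl h4) h3
end

section
/- Let F_q be a finite field, A_1, …, A_n nonempty subsets of F_q, f_i = Π_{c ∈ A_i}(X_i − c), and I = (f_1,…,f_n). Then I equals the vanishing ideal of the set X = A_1 × ⋯ × A_n ⊆ F_q^n, i.e., a polynomial f ∈ F_q[X_1,…,X_n] vanishes at every point of X if and only if f ∈ I. -/
open MvPolynomial

theorem stmt5_general (F : Type*) [Field F] (n : ℕ)
    (A : Fin n → Finset F) (hA : ∀ i, (A i).Nonempty)
    (f : MvPolynomial (Fin n) F) :
    (∀ x : Fin n → F, (∀ i, x i ∈ A i) → eval x f = 0) ↔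
      f ∈ Ideal.span (Set.range fun i : Fin n =>
        ∏ c ∈ A i, (X i - C c : MvPolynomial (Fin n) F)) := by
  constructor
  · intro hf
    obtain ⟨h, -, rfl⟩ := combinatorial_nullstellensatz_exists_linearCombination A hA f hf
    rw [Ideal.span, ← Finsupp.range_linearCombination]
    exact LinearMap.mem_range_self _ h
  · intro hf x hx
    refine RingHom.mem_ker.mp (Ideal.span_le.mpr ?_ hf)
    rintro _ ⟨i, rfl⟩
    simpa [eval_prod] using Finset.prod_eq_zero (hx i) (sub_self (x i))

/-- `I = (f_1, …, f_n)` is the vanishing ideal of `X = A_1 × ⋯ × A_n`: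
a polynomial vanishes on `X` iff it belongs to `I`. -/
theorem stmt5 (F : Type*) [Field F] [Fintype F] (n : ℕ)
    (A : Fin n → Finset F) (hA : ∀ i, (A i).Nonempty)
    (f : MvPolynomial (Fin n) F) :
    (∀ x : Fin n → F, (∀ i, x i ∈ A i) → eval x f = 0) ↔
      f ∈ Ideal.span (Set.range fun i : Fin n =>
        ∏ c ∈ A i, (X i - C c : MvPolynomial (Fin n) F)) :=
  stmt5_general F n A hA f
end

section
/- Let F_q be a finite field, A_1, …, A_n nonempty subsets of F_q with #A_i = d_i, and X = A_1 × ⋯ × A_n. If d ≥ Σ_{i=1}^n (d_i − 1), then the evaluation map sending a polynomial f ∈ F_q[X_1,…,X_n] of degree ≤ d to its vector of values (f(P))_{P ∈ X} ∈ F_q^{|X|} is surjective; in particular the affine cartesian code C(d) equals all of F_q^{d_1 ⋯ d_n}. -/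
open MvPolynomial

/-- If `d ≥ ∑ (d_i - 1)` then evaluation of polynomials of degree at most `d`
at the points of `X = A_1 × ⋯ × A_n` is surjective, so `C(d) = F_q^{d_1⋯d_n}`. -/
theorem stmt7 (F : Type*) [Field F] [Fintype F] (n : ℕ)
    (A : Fin n → Finset F) (hA : ∀ i, (A i).Nonempty) (d : ℕ)
    (hd : (∑ i : Fin n, ((A i).card - 1)) ≤ d)
    (w : {x : Fin n → F // ∀ i, x i ∈ A i} → F) :
    ∃ f : MvPolynomial (Fin n) F, f.totalDegree ≤ d ∧
      ∀ x : {x : Fin n → F // ∀ i, x i ∈ A i}, eval x.1 f = w x := by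
  classical
  let ind : {x : Fin n → F // ∀ i, x i ∈ A i} → MvPolynomial (Fin n) F := fun p =>
    ∏ i, ∏ a ∈ (A i).erase (p.1 i), C ((p.1 i - a)⁻¹) * (X i - C a)
  have hdeg : ∀ p : {x : Fin n → F // ∀ i, x i ∈ A i}, (ind p).totalDegree ≤ ∑ i : Fin n, ((A i).card - 1) := by
    intro p
    refine (totalDegree_finset_prod _ _).trans (Finset.sum_le_sum fun i _ => ?_)
    refine (totalDegree_finset_prod _ _).trans ?_
    have h1 : ∀ a ∈ (A i).erase (p.1 i),
        (C ((p.1 i - a)⁻¹) * (X i - C a) : MvPolynomial (Fin n) F).totalDegree ≤ 1 := by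
      intro a _
      refine (totalDegree_mul _ _).trans ?_
      have : (X i - C a : MvPolynomial (Fin n) F).totalDegree ≤ 1 := by
        rw [sub_eq_add_neg]
        refine (totalDegree_add _ _).trans ?_
        simp [totalDegree_X, totalDegree_neg]
      simpa [totalDegree_C] using this
    calc ∑ a ∈ (A i).erase (p.1 i),
          (C ((p.1 i - a)⁻¹) * (X i - C a) : MvPolynomial (Fin n) F).totalDegree
        ≤ ∑ _a ∈ (A i).erase (p.1 i), 1 := Finset.sum_le_sum h1
      _ = ((A i).erase (p.1 i)).card := by simp
      _ = (A i).card - 1 := Finset.card_erase_of_mem (p.2 i)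
  have hev : ∀ p x : {x : Fin n → F // ∀ i, x i ∈ A i}, eval x.1 (ind p) = if p = x then 1 else 0 := by
    intro p x
    by_cases h : p = x
    · subst h
      simp only [ind, eval_prod, eval_mul, eval_C, eval_sub, eval_X, if_pos rfl]
      refine Finset.prod_eq_one fun i _ => Finset.prod_eq_one fun a ha => ?_
      exact inv_mul_cancel₀ (sub_ne_zero.mpr fun hc =>
          (Finset.ne_of_mem_erase ha) hc.symm)
    · rw [if_neg h]
      have : ∃ i, p.1 i ≠ x.1 i := by
        by_contra hc
        push_neg at hc
        exact h (Subtype.ext (funext hc))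
      obtain ⟨i, hi⟩ := this
      simp only [ind, eval_prod, eval_mul, eval_C, eval_sub, eval_X]
      refine Finset.prod_eq_zero (Finset.mem_univ i) ?_
      refine Finset.prod_eq_zero (Finset.mem_erase.mpr ⟨fun hc => hi hc.symm, x.2 i⟩) ?_
      simp
  refine ⟨∑ p : {x : Fin n → F // ∀ i, x i ∈ A i}, C (w p) * ind p, ?_, ?_⟩
  · refine (totalDegree_finset_sum _ _).trans (Finset.sup_le fun p _ => ?_)
    refine (totalDegree_mul _ _).trans ?_
    simpa [totalDegree_C] using (hdeg p).trans hd
  · intro x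
    rw [map_sum]
    simp only [eval_mul, eval_C, hev]
    simp [Finset.sum_ite_eq' Finset.univ x w]
end

section
/- Let A_1, A_2 ⊆ F_q with 3 ≤ #A_1 = d_1 < d_2 = #A_2, and let 2 ≤ d < d_1. Then the second Hamming weight of the affine cartesian code C(d) over X = A_1 × A_2 equals (d_1 − d + 1)(d_2 − 1). -/
open MvPolynomial

/-- The set of Hamming weights of nonzero codewords of `C(d)` over
`X = A_1 × ⋯ × A_n`. -/
def codeWeights (F : Type*) [Field F] (n : ℕ) (A : Fin n → Finset F)
    (d : ℕ) : Set ℕ :=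
  {w | ∃ f : MvPolynomial (Fin n) F, f.totalDegree ≤ d ∧
    w = Set.ncard {x : Fin n → F | (∀ i, x i ∈ A i) ∧ eval x f ≠ 0} ∧ w ≠ 0}

/-!
Let `f ≠ 0` have total degree at most `d`, and let `S ⊆ A 0` (the paper's `A_1`) be the set of `a`
on whose line `X₀ = a` the polynomial `f` vanishes identically. Then `∏_{a ∈ S} (X₀ - a)` divides
`f`, so `t = |S| ≤ d`, and on each remaining line of `A 0` the restriction of `f` is a nonzero
polynomial of degree at most `d - t`. Hence `(d₁ - t)(d₂ - d + t) ≤ wt f ≤ (d₁ - t) d₂`. For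
`t = d` this pins `wt f` to the minimum distance `(d₁ - d) d₂`; for `t < d` the lower bound is at
least `(d₁ - d + 1)(d₂ - 1)`. Both values are attained by products of lines
`∏_{a ∈ S} (X₀ - a) · ∏_{b ∈ B} (X₁ - b)`.
-/

open Finset

lemma sub_mul_le_sub_mul_sub {t d m n : ℕ} (htd : t ≤ d) (hdm : d ≤ m) (hmn : m ≤ n) :
    (m - d) * n ≤ (m - t) * (n - (d - t)) := by
  zify [htd, hdm, htd.trans hdm, (Nat.sub_le d t).trans (hdm.trans hmn)]
  nlinarith [mul_nonneg (sub_nonneg.2 (Int.ofNat_le.2 htd)) (by omega : (0 : ℤ) ≤ n - m + t)]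

lemma sub_mul_lt_succ_sub_mul_pred {d m n : ℕ} (hd : 1 ≤ d) (hdm : d ≤ m) (hmn : m < n) :
    (m - d) * n < (m - d + 1) * (n - 1) := by
  obtain ⟨k, rfl⟩ : ∃ k, n = k + 1 := ⟨n - 1, by omega⟩
  rw [Nat.add_sub_cancel, add_mul, mul_add, one_mul, mul_one]
  omega

lemma natDegree_aeval_le_totalDegree {σ R : Type*} [CommSemiring R] {g : σ → Polynomial R}
    (hg : ∀ i, (g i).natDegree ≤ 1) (f : MvPolynomial σ R) :
    (aeval g f).natDegree ≤ f.totalDegree := by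
  conv_lhs => rw [f.as_sum, map_sum]
  refine Polynomial.natDegree_sum_le_of_forall_le _ _ fun m hm => ?_
  rw [aeval_monomial, Polynomial.algebraMap_eq]
  calc _ ≤ (m.prod fun i k => g i ^ k).natDegree := Polynomial.natDegree_C_mul_le _ _
    _ ≤ ∑ i ∈ m.support, (g i ^ m i).natDegree := Polynomial.natDegree_prod_le _ _
    _ ≤ ∑ i ∈ m.support, m i := sum_le_sum fun i _ =>
        Polynomial.natDegree_pow_le.trans ((Nat.mul_le_mul_left _ (hg i)).trans_eq (mul_one _))
    _ ≤ f.totalDegree := le_totalDegree hm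

section

variable {σ R : Type*} [CommRing R] [IsDomain R]

lemma totalDegree_X_sub_C (i : σ) (a : R) : (X i - C a : MvPolynomial σ R).totalDegree = 1 := by
  rw [sub_eq_add_neg, ← map_neg, totalDegree_add_eq_left_of_totalDegree_lt] <;> simp

lemma X_sub_C_ne_zero (i : σ) (a : R) : (X i - C a : MvPolynomial σ R) ≠ 0 := fun h => by
  simpa [h] using totalDegree_X_sub_C i a

lemma totalDegree_prod_X_sub_C (i : σ) (S : Finset R) :
    (∏ a ∈ S, (X i - C a : MvPolynomial σ R)).totalDegree = #S := by
  classical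
  induction S using Finset.induction_on with
  | empty => simp
  | insert a S ha ih =>
    rw [prod_insert ha, totalDegree_mul_of_isDomain (X_sub_C_ne_zero i a)
      (prod_ne_zero_iff.2 fun b _ => X_sub_C_ne_zero i b), totalDegree_X_sub_C, ih,
      card_insert_of_notMem ha, add_comm]

open scoped Classical in
lemma card_sub_natDegree_le_card_filter_eval_ne_zero {p : Polynomial R} (hp : p ≠ 0)
    (B : Finset R) : #B - p.natDegree ≤ #{b ∈ B | p.eval b ≠ 0} := by
  have hroots : #{b ∈ B | p.eval b = 0} ≤ p.natDegree :=
    Polynomial.card_le_degree_of_subset_roots fun b hb =>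
      (Polynomial.mem_roots hp).2 (mem_filter.1 hb).2
  have := card_filter_add_card_filter_not (s := B) fun b => p.eval b = 0
  simp only [ne_eq] at this ⊢
  omega

end

section

variable {F : Type*} [Field F]

lemma isCoprime_X_sub_C {σ : Type*} (i : σ) {a b : F} (h : a ≠ b) :
    IsCoprime (X i - C a : MvPolynomial σ F) (X i - C b) := by
  convert (Polynomial.isCoprime_X_sub_C_of_isUnit_sub (sub_ne_zero.2 h).isUnit).map
    (Polynomial.aeval (R := F) (X i : MvPolynomial σ F)).toRingHom using 1 <;> simp

noncomputable def lineRestrict (a : F) : MvPolynomial (Fin 2) F →ₐ[F] Polynomial F :=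
  aeval ![Polynomial.C a, Polynomial.X]

lemma eval_lineRestrict (a b : F) (f : MvPolynomial (Fin 2) F) :
    (lineRestrict a f).eval b = eval ![a, b] f := by
  rw [lineRestrict, ← Polynomial.coe_aeval_eq_eval, ← AlgHom.comp_apply, comp_aeval,
    ← coe_aeval_eq_eval]
  refine congrArg (aeval · f) (funext fun i => ?_)
  fin_cases i <;> simp

lemma natDegree_lineRestrict_le (a : F) (f : MvPolynomial (Fin 2) F) :
    (lineRestrict a f).natDegree ≤ f.totalDegree :=
  natDegree_aeval_le_totalDegree (fun i => by fin_cases i <;> simp) f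

lemma lineRestrict_X_zero_sub_C (a b : F) :
    lineRestrict a (X 0 - C b) = Polynomial.C (a - b) := by
  simp [lineRestrict]

lemma X_zero_sub_C_dvd_sub_lineRestrict (a : F) (f : MvPolynomial (Fin 2) F) :
    X 0 - C a ∣ f - Polynomial.aeval (X 1) (lineRestrict a f) := by
  -- modulo `X₀ - a`, substituting `a` for `X₀` changes nothing
  set I := Ideal.span {(X 0 - C a : MvPolynomial (Fin 2) F)}
  rw [← Ideal.mem_span_singleton, ← Ideal.Quotient.eq]
  suffices (Ideal.Quotient.mkₐ F I).comp ((Polynomial.aeval (X 1)).comp (lineRestrict a)) =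
      Ideal.Quotient.mkₐ F I from (AlgHom.congr_fun this f).symm
  ext i
  fin_cases i
  · simp [lineRestrict, Ideal.Quotient.eq, I, Ideal.mem_span_singleton, dvd_sub_comm]
  · simp [lineRestrict]

lemma prod_X_zero_sub_C_dvd {S : Finset F} {f : MvPolynomial (Fin 2) F}
    (hS : ∀ a ∈ S, lineRestrict a f = 0) : ∏ a ∈ S, (X 0 - C a) ∣ f :=
  prod_dvd_of_coprime (fun a _ b _ hab => isCoprime_X_sub_C 0 hab) fun a ha => by
    simpa [hS a ha] using X_zero_sub_C_dvd_sub_lineRestrict a f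

lemma card_le_totalDegree_of_lineRestrict_eq_zero {S : Finset F} {f : MvPolynomial (Fin 2) F}
    (hf : f ≠ 0) (hS : ∀ a ∈ S, lineRestrict a f = 0) : #S ≤ f.totalDegree :=
  totalDegree_prod_X_sub_C (0 : Fin 2) S ▸
    totalDegree_le_of_dvd_of_isDomain (prod_X_zero_sub_C_dvd hS) hf

lemma natDegree_lineRestrict_add_card_le {S : Finset F} {f : MvPolynomial (Fin 2) F} (hf : f ≠ 0)
    (hS : ∀ a ∈ S, lineRestrict a f = 0) {a : F} (ha : a ∉ S) :
    (lineRestrict a f).natDegree + #S ≤ f.totalDegree := by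
  obtain ⟨h, rfl⟩ := prod_X_zero_sub_C_dvd hS
  have hprod : ∏ b ∈ S, (a - b) ≠ 0 :=
    prod_ne_zero_iff.2 fun b hb => sub_ne_zero.2 (ne_of_mem_of_not_mem hb ha).symm
  rw [map_mul, map_prod, prod_congr rfl fun b _ => lineRestrict_X_zero_sub_C a b,
    ← map_prod Polynomial.C, Polynomial.natDegree_C_mul hprod,
    totalDegree_mul_of_isDomain (left_ne_zero_of_mul hf) (right_ne_zero_of_mul hf),
    totalDegree_prod_X_sub_C]
  linarith [natDegree_lineRestrict_le a h]

noncomputable def evalWeight {n : ℕ} (A : Fin n → Finset F) (f : MvPolynomial (Fin n) F) : ℕ :=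
  {x : Fin n → F | (∀ i, x i ∈ A i) ∧ eval x f ≠ 0}.ncard

lemma mem_codeWeights {n : ℕ} {A : Fin n → Finset F} {d w : ℕ} :
    w ∈ codeWeights F n A d ↔
      ∃ f : MvPolynomial (Fin n) F, f.totalDegree ≤ d ∧ w = evalWeight A f ∧ w ≠ 0 :=
  Iff.rfl

lemma evalWeight_zero {n : ℕ} (A : Fin n → Finset F) : evalWeight A 0 = 0 := by
  simp [evalWeight]

open scoped Classical in
lemma evalWeight_eq_card (A : Fin 2 → Finset F) (f : MvPolynomial (Fin 2) F) :
    evalWeight A f = #{p ∈ A 0 ×ˢ A 1 | eval ![p.1, p.2] f ≠ 0} := by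
  have hset : {x : Fin 2 → F | (∀ i, x i ∈ A i) ∧ eval x f ≠ 0} =
      finTwoArrowEquiv F ⁻¹' ↑{p ∈ A 0 ×ˢ A 1 | eval ![p.1, p.2] f ≠ 0} := by
    ext x
    have hx : ![x 0, x 1] = x := (finTwoArrowEquiv F).symm_apply_apply x
    simp [Fin.forall_fin_two, hx]
  rw [evalWeight, hset, Set.ncard_preimage_of_injective_subset_range (Equiv.injective _)
    (by rw [Equiv.range_eq_univ]; exact Set.subset_univ _), Set.ncard_coe_finset]

open scoped Classical in
lemma evalWeight_eq_sum (A : Fin 2 → Finset F) (f : MvPolynomial (Fin 2) F) :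
    evalWeight A f = ∑ a ∈ A 0, #{b ∈ A 1 | (lineRestrict a f).eval b ≠ 0} := by
  simp only [evalWeight_eq_card, eval_lineRestrict, card_filter, sum_product]

open scoped Classical in
lemma exists_evalWeight_bounds (A : Fin 2 → Finset F) {f : MvPolynomial (Fin 2) F} (hf : f ≠ 0)
    {d : ℕ} (hd : f.totalDegree ≤ d) :
    ∃ t ≤ d, (#(A 0) - t) * (#(A 1) - (d - t)) ≤ evalWeight A f ∧
      evalWeight A f ≤ (#(A 0) - t) * #(A 1) := by
  set S := {a ∈ A 0 | lineRestrict a f = 0}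
  have hS : ∀ a ∈ S, lineRestrict a f = 0 := fun a ha => (mem_filter.1 ha).2
  have hSA : S ⊆ A 0 := filter_subset _ _
  have hweight : evalWeight A f = ∑ a ∈ A 0 \ S, #{b ∈ A 1 | (lineRestrict a f).eval b ≠ 0} := by
    rw [evalWeight_eq_sum, ← sum_sdiff hSA,
      sum_eq_zero (s := S) fun a ha => by simp [hS a ha], add_zero]
  have hcard : #(A 0 \ S) = #(A 0) - #S := card_sdiff_of_subset hSA
  refine ⟨#S, (card_le_totalDegree_of_lineRestrict_eq_zero hf hS).trans hd, ?_, ?_⟩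
  · rw [hweight, ← hcard, ← smul_eq_mul]
    refine card_nsmul_le_sum _ _ _ fun a ha => ?_
    obtain ⟨haA, haS⟩ := mem_sdiff.1 ha
    have hdeg := natDegree_lineRestrict_add_card_le hf hS haS
    have := card_sub_natDegree_le_card_filter_eval_ne_zero
      (fun h0 => haS (mem_filter.2 ⟨haA, h0⟩)) (A 1)
    omega
  · rw [hweight, ← hcard, ← smul_eq_mul]
    exact sum_le_card_nsmul _ _ _ fun a _ => card_filter_le _ _

open scoped Classical in
lemma evalWeight_prod_X_sub_C_mul_prod_X_sub_C {A : Fin 2 → Finset F} {S B : Finset F}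
    (hS : S ⊆ A 0) (hB : B ⊆ A 1) :
    evalWeight A ((∏ a ∈ S, (X 0 - C a)) * ∏ b ∈ B, (X 1 - C b)) =
      (#(A 0) - #S) * (#(A 1) - #B) := by
  rw [evalWeight_eq_card, ← card_sdiff_of_subset hS, ← card_sdiff_of_subset hB, ← card_product]
  congr 1
  ext ⟨a, b⟩
  simp [prod_eq_zero_iff, sub_eq_zero]
  tauto

lemma sub_mul_sub_mem_codeWeights {A : Fin 2 → Finset F} {s b d : ℕ} (hs : s < #(A 0))
    (hb : b < #(A 1)) (hd : s + b ≤ d) : (#(A 0) - s) * (#(A 1) - b) ∈ codeWeights F 2 A d := by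
  obtain ⟨S, hSA, rfl⟩ := exists_subset_card_eq hs.le
  obtain ⟨B, hBA, rfl⟩ := exists_subset_card_eq hb.le
  refine mem_codeWeights.2 ⟨_, ?_, (evalWeight_prod_X_sub_C_mul_prod_X_sub_C hSA hBA).symm,
    Nat.mul_ne_zero (by omega) (by omega)⟩
  calc _ ≤ _ := totalDegree_mul _ _
    _ = #S + #B := by rw [totalDegree_prod_X_sub_C, totalDegree_prod_X_sub_C]
    _ ≤ d := hd

lemma le_of_mem_codeWeights {A : Fin 2 → Finset F} {d w : ℕ} (hw : w ∈ codeWeights F 2 A d)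
    (hd : d ≤ #(A 0)) (h01 : #(A 0) ≤ #(A 1)) : (#(A 0) - d) * #(A 1) ≤ w := by
  obtain ⟨f, hfd, rfl, hw0⟩ := mem_codeWeights.1 hw
  obtain ⟨t, htd, hlow, -⟩ :=
    exists_evalWeight_bounds A (fun hf => hw0 (by rw [hf, evalWeight_zero])) hfd
  exact (sub_mul_le_sub_mul_sub htd hd h01).trans hlow

lemma succ_sub_mul_pred_le_of_mem_codeWeights {A : Fin 2 → Finset F} {d w : ℕ}
    (hw : w ∈ codeWeights F 2 A d) (hd : d ≤ #(A 0)) (h01 : #(A 0) < #(A 1))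
    (hlt : (#(A 0) - d) * #(A 1) < w) : (#(A 0) - d + 1) * (#(A 1) - 1) ≤ w := by
  obtain ⟨f, hfd, rfl, hw0⟩ := mem_codeWeights.1 hw
  obtain ⟨t, htd, hlow, hup⟩ :=
    exists_evalWeight_bounds A (fun hf => hw0 (by rw [hf, evalWeight_zero])) hfd
  have htd' : t < d := htd.lt_of_ne fun h => by subst h; omega
  have := sub_mul_le_sub_mul_sub (m := #(A 0)) (n := #(A 1) - 1) (Nat.le_sub_one_of_lt htd')
    (by omega) (by omega)
  rw [show #(A 0) - (d - 1) = #(A 0) - d + 1 by omega,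
    show #(A 1) - 1 - (d - 1 - t) = #(A 1) - (d - t) by omega] at this
  exact this.trans hlow

end

theorem stmt14_general (F : Type*) [Field F]
    (A : Fin 2 → Finset F) (d₁ d₂ : ℕ)
    (hA1 : (A 0).card = d₁) (hA2 : (A 1).card = d₂)
    (h12 : d₁ < d₂)
    (d : ℕ) (hd2 : 2 ≤ d) (hdd : d < d₁) :
    IsLeast {w | w ∈ codeWeights F 2 A d ∧ sInf (codeWeights F 2 A d) < w}
      ((d₁ - d + 1) * (d₂ - 1)) := by
  subst hA1 hA2
  have hmin : (#(A 0) - d) * #(A 1) ∈ codeWeights F 2 A d := by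
    simpa using sub_mul_sub_mem_codeWeights (b := 0) hdd (by omega) le_rfl
  have hInf : sInf (codeWeights F 2 A d) = (#(A 0) - d) * #(A 1) :=
    le_antisymm (Nat.sInf_le hmin)
      (le_of_mem_codeWeights (Nat.sInf_mem ⟨_, hmin⟩) hdd.le h12.le)
  have hsecond : (#(A 0) - d + 1) * (#(A 1) - 1) ∈ codeWeights F 2 A d := by
    have := sub_mul_sub_mem_codeWeights (A := A) (s := d - 1) (b := 1) (d := d)
      (by omega) (by omega) (by omega)
    rwa [show #(A 0) - (d - 1) = #(A 0) - d + 1 by omega] at this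
  rw [hInf]
  exact ⟨⟨hsecond, sub_mul_lt_succ_sub_mul_pred (by omega) hdd.le h12⟩,
    fun w ⟨hw, hlt⟩ => succ_sub_mul_pred_le_of_mem_codeWeights hw hdd.le h12 hlt⟩

/-- Theorem 3 of the paper: for `X = A_1 × A_2` with `3 ≤ d_1 < d_2` and
`2 ≤ d < d_1`, the second Hamming weight of `C(d)` is `(d_1 - d + 1)(d_2 - 1)`. -/
theorem stmt14 (F : Type*) [Field F] [Fintype F]
    (A : Fin 2 → Finset F) (d₁ d₂ : ℕ)
    (hA1 : (A 0).card = d₁) (hA2 : (A 1).card = d₂)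
    (h3 : 3 ≤ d₁) (h12 : d₁ < d₂)
    (d : ℕ) (hd2 : 2 ≤ d) (hdd : d < d₁) :
    IsLeast {w | w ∈ codeWeights F 2 A d ∧ sInf (codeWeights F 2 A d) < w}
      ((d₁ - d + 1) * (d₂ - 1)) :=
  stmt14_general F A d₁ d₂ hA1 hA2 h12 d hd2 hdd
end

section
/- Let 2 ≤ d_1 ≤ ⋯ ≤ d_n with n ≥ 2, and let d be an integer with Σ_{i=1}^{n−1}(d_i − 1) ≤ d < Σ_{i=1}^n (d_i − 1). Write d = Σ_{i=1}^{n−1}(d_i − 1) + ℓ with 0 ≤ ℓ < d_n − 1. Then for each t ∈ {1, …, ℓ + 1}, the t-th Hamming weight of the affine cartesian code C(d) over X = A_1 × ⋯ × A_n (with #A_i = d_i) equals d_n − ℓ + (t − 1). -/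
/-!
The weights of `C(d)` are bounded below by a weak Alon–Füredi bound: a polynomial `f` that is
nonzero somewhere on the grid `X = A_1 × ⋯ × A_n` is nonzero at no fewer than
`∑ (#A_i - 1) + 1 - deg f` of its points. Division by the polynomials `∏_{a ∈ A_i} (X_i - a)`
(for the degree-lexicographic order) makes `f` reduced without changing it on `X` or raising
its degree. If a reduced `f` had fewer nonzeros, multiplying it by one linear factor
`X_j - z_j` per nonzero `z`, with the coordinates `j` spread so that the leading exponent stays
below `(#A_i)_i`, would give a polynomial vanishing on `X` against the Combinatorial
Nullstellensatz. Conversely, a product of linear factors vanishing on `A_i` except at one point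
for `i < n`, and at `s ≤ ℓ` points of `A_n`, has degree at most `d` and weight `d_n - s`; so the
weights of `C(d)` begin with the interval `d_n - ℓ, …, d_n`.
-/

open MvPolynomial

open Finset MonomialOrder

theorem exists_card_fiber_le_of_card_le_sum {α σ : Type*} [Fintype α] [Fintype σ]
    [DecidableEq σ] (s : σ → ℕ) (hs : Fintype.card α ≤ ∑ i, s i) :
    ∃ φ : α → σ, ∀ i, #{z | φ z = i} ≤ s i := by
  obtain ⟨e⟩ : Nonempty (α ↪ Σ i, Fin (s i)) :=
    Function.Embedding.nonempty_of_card_le (by simpa using hs)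
  refine ⟨fun z ↦ (e z).1, fun i ↦ ?_⟩
  calc #{z | (e z).1 = i}
      ≤ #(univ.map (Function.Embedding.sigmaMk (β := fun i ↦ Fin (s i)) i)) := by
        refine card_le_card_of_injOn e (fun z hz ↦ ?_) e.injective.injOn
        simp only [coe_filter, mem_univ, true_and, Set.mem_ofPred_eq] at hz
        rcases hez : e z with ⟨j, y⟩
        rw [hez] at hz
        cases hz
        simp
    _ = s i := by simp

theorem Nat.nth_eq_add_of_Icc_subset {p : ℕ → Prop} [DecidablePred p] {a k ℓ : ℕ}
    (hp : ∀ w, p w → a ≤ w) (hIcc : ∀ w, a ≤ w → w ≤ a + ℓ → p w) (hk : k ≤ ℓ) :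
    Nat.nth p k = a + k := by
  have hcount : Nat.count p (a + k) = k := by
    rw [Nat.count_add, Nat.count_iff_forall_not.mpr fun w hw hpw ↦ by have := hp w hpw; omega,
      Nat.count_of_forall fun w hw ↦ hIcc _ (by omega) (by omega), zero_add]
  simpa [hcount] using Nat.nth_count (p := p) (hIcc (a + k) (by omega) (by omega))

namespace MvPolynomial

variable {σ R : Type*} [CommRing R] [Fintype σ]

def IsReducedOn (A : σ → Finset R) (f : MvPolynomial σ R) : Prop :=
  ∀ c ∈ f.support, ∀ i, c i < #(A i)

theorem exists_isReducedOn [Nontrivial R] (A : σ → Finset R) (f : MvPolynomial σ R) :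
    ∃ r : MvPolynomial σ R, IsReducedOn A r ∧ r.totalDegree ≤ f.totalDegree ∧
      ∀ x : σ → R, (∀ i, x i ∈ A i) → eval x r = eval x f := by
  let _ : LinearOrder σ := WellOrderingRel.isWellOrder.linearOrder
  set P : σ → MvPolynomial σ R := fun i ↦ ∏ a ∈ A i, (X i - C a)
  have hPmonic (i : σ) : degLex.Monic (P i) := Monic.prod fun a _ ↦ degLex.monic_X_sub_C i a
  have hPdeg (i : σ) : degLex.degree (P i) = Finsupp.single i #(A i) := by
    rw [degree_prod_of_regular fun a _ ↦ by
      rw [(degLex.monic_X_sub_C i a).leadingCoeff_eq_one]; exact isRegular_one]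
    simp [degree_X_sub_C]
  obtain ⟨g, r, hf, hgdeg, hr⟩ :=
    degLex.div (fun i ↦ by rw [(hPmonic i).leadingCoeff_eq_one]; exact isUnit_one) f
  have hr_eq : r = f - Finsupp.linearCombination _ P g := by rw [hf]; ring
  refine ⟨r, fun c hc i ↦ ?_, ?_, fun x hx ↦ ?_⟩
  · simpa [hPdeg, Finsupp.single_le_iff] using hr c hc i
  · have hcomb : (Finsupp.linearCombination _ P g).totalDegree ≤ f.totalDegree := by
      rw [Finsupp.linearCombination_apply]
      refine totalDegree_finsetSum_le fun i _ ↦ ?_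
      change (g i * P i).totalDegree ≤ _
      rw [mul_comm]
      exact degLex_totalDegree_monotone (hgdeg i)
    rw [hr_eq]
    exact (totalDegree_sub _ _).trans (max_le le_rfl hcomb)
  · have hP (i : σ) : eval x (P i) = 0 := by
      rw [map_prod]
      exact prod_eq_zero (hx i) (by simp)
    simp [hr_eq, Finsupp.linearCombination_apply, Finsupp.sum, hP]

theorem totalDegree_prod_prod_X_sub_C_le [Nontrivial R] (S : σ → Finset R) :
    (∏ i, ∏ a ∈ S i, (X i - C a)).totalDegree ≤ ∑ i, #(S i) := by
  refine (totalDegree_finsetProd _ _).trans (sum_le_sum fun i _ ↦ ?_)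
  refine (totalDegree_finsetProd _ _).trans ?_
  calc ∑ a ∈ S i, (X i - C a : MvPolynomial σ R).totalDegree ≤ ∑ _a ∈ S i, 1 :=
        sum_le_sum fun a _ ↦ (totalDegree_sub _ _).trans (by simp)
    _ = #(S i) := by simp

variable [DecidableEq σ] [DecidableEq R]

noncomputable def gridSupport (A : σ → Finset R) (f : MvPolynomial σ R) : Finset (σ → R) :=
  {x ∈ Fintype.piFinset A | eval x f ≠ 0}

theorem ncard_eq_card_gridSupport (A : σ → Finset R) (f : MvPolynomial σ R) :
    {x : σ → R | (∀ i, x i ∈ A i) ∧ eval x f ≠ 0}.ncard = #(gridSupport A f) := by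
  rw [← Set.ncard_coe_finset]
  congr 1
  ext x
  simp [gridSupport]

variable [IsDomain R]

theorem sum_card_sub_one_lt_of_isReducedOn {A : σ → Finset R} {r : MvPolynomial σ R}
    (hr : IsReducedOn A r) (hr0 : r ≠ 0) :
    ∑ i, (#(A i) - 1) < #(gridSupport A r) + r.totalDegree := by
  let _ : LinearOrder σ := WellOrderingRel.isWellOrder.linearOrder
  by_contra! h
  set Z := gridSupport A r
  set t := degLex.degree r
  have ht (i : σ) : t i < #(A i) := hr t (degLex.degree_mem_support hr0) i
  have hslack : Fintype.card Z ≤ ∑ i, (#(A i) - 1 - t i) := by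
    have htdeg : ∑ i, t i = r.totalDegree := by
      rw [← Finsupp.degree_eq_sum, degree_degLexDegree]
    rw [Fintype.card_coe, sum_tsub_distrib _ fun i _ ↦ Nat.le_sub_one_of_lt (ht i), htdeg]
    omega
  obtain ⟨φ, hφ⟩ := exists_card_fiber_le_of_card_le_sum _ hslack
  -- `g` vanishes on `Z` and `r` vanishes on the rest of the grid, while the fibres of `φ` are
  -- small enough for the leading exponent of `r * g` to stay below `(#A i)_i`.
  set g : MvPolynomial σ R := ∏ z : Z, (X (φ z) - C ((z : σ → R) (φ z)))
  have hgmonic : degLex.Monic g := Monic.prod fun z _ ↦ degLex.monic_X_sub_C _ _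
  have hdeg : degLex.degree (r * g) = t + ∑ z : Z, Finsupp.single (φ z) 1 := by
    rw [degree_mul hr0 hgmonic.ne_zero, degree_prod_of_regular fun z _ ↦ by
      rw [(degLex.monic_X_sub_C _ _).leadingCoeff_eq_one]; exact isRegular_one]
    simp [degree_X_sub_C, t]
  have hdeg_lt (i : σ) : degLex.degree (r * g) i < #(A i) := by
    have := hφ i
    have := ht i
    simp only [hdeg, Finsupp.add_apply, Finsupp.finsetSum_apply, Finsupp.single_apply]
    rw [sum_boole]
    push_cast
    omega
  obtain ⟨x, hxA, hx⟩ := combinatorial_nullstellensatz_exists_eval_nonzero (r * g)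
    (degLex.degree (r * g)) (degLex.coeff_degree_ne_zero_iff.mpr (mul_ne_zero hr0 hgmonic.ne_zero))
    degree_degLexDegree.symm A hdeg_lt
  rw [map_mul] at hx
  by_cases hxZ : x ∈ Z
  · refine right_ne_zero_of_mul hx ?_
    rw [map_prod]
    exact prod_eq_zero (mem_univ ⟨x, hxZ⟩) (by simp)
  · refine left_ne_zero_of_mul hx ?_
    simpa [Z, gridSupport, Fintype.mem_piFinset, hxA] using hxZ

theorem sum_card_sub_one_lt_card_gridSupport_add_totalDegree {A : σ → Finset R}
    {f : MvPolynomial σ R} (hf : (gridSupport A f).Nonempty) :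
    ∑ i, (#(A i) - 1) < #(gridSupport A f) + f.totalDegree := by
  obtain ⟨x, hx⟩ := hf
  simp only [gridSupport, mem_filter, Fintype.mem_piFinset] at hx
  obtain ⟨r, hr, hdeg, heval⟩ := exists_isReducedOn A f
  have hsupp : gridSupport A r = gridSupport A f :=
    filter_congr fun y hy ↦ by rw [heval y (Fintype.mem_piFinset.mp hy)]
  have hr0 : r ≠ 0 := by
    rintro rfl
    exact hx.2 (by rw [← heval x hx.1, map_zero])
  have := sum_card_sub_one_lt_of_isReducedOn hr hr0
  rw [hsupp] at this
  omega

theorem gridSupport_prod_prod_X_sub_C {A B : σ → Finset R} (hB : ∀ i, B i ⊆ A i) :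
    gridSupport A (∏ i, ∏ a ∈ A i \ B i, (X i - C a)) = Fintype.piFinset B := by
  ext x
  simp only [gridSupport, mem_filter, Fintype.mem_piFinset, map_prod, map_sub, eval_X, eval_C,
    prod_ne_zero_iff, mem_univ, true_implies, mem_sdiff, sub_ne_zero]
  constructor
  · rintro ⟨hxA, hx⟩ i
    by_contra hxB
    exact hx i (x i) ⟨hxA i, hxB⟩ rfl
  · intro hxB
    exact ⟨fun i ↦ hB i (hxB i), fun i a ha hxa ↦ ha.2 (hxa ▸ hxB i)⟩

theorem exists_card_gridSupport_eq_prod (A : σ → Finset R) (c : σ → ℕ)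
    (hc : ∀ i, c i ≤ #(A i)) :
    ∃ f : MvPolynomial σ R, f.totalDegree ≤ ∑ i, (#(A i) - c i) ∧
      #(gridSupport A f) = ∏ i, c i := by
  choose B hBA hBcard using fun i ↦ exists_subset_card_eq (hc i)
  refine ⟨∏ i, ∏ a ∈ A i \ B i, (X i - C a),
    (totalDegree_prod_prod_X_sub_C_le _).trans_eq ?_, ?_⟩
  · simp [card_sdiff_of_subset (hBA _), hBcard]
  · rw [gridSupport_prod_prod_X_sub_C hBA, Fintype.card_piFinset]
    exact prod_congr rfl fun i _ ↦ hBcard i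

end MvPolynomial

section codeWeights

variable {F : Type*} [Field F] [DecidableEq F] {n : ℕ} {A : Fin n → Finset F} {d w : ℕ}

theorem mem_codeWeights_iff : w ∈ codeWeights F n A d ↔
    ∃ f : MvPolynomial (Fin n) F, f.totalDegree ≤ d ∧ w = #(gridSupport A f) ∧ w ≠ 0 := by
  simp only [codeWeights, Set.mem_ofPred_eq, ncard_eq_card_gridSupport]

theorem sum_card_sub_one_lt_add_of_mem_codeWeights (hw : w ∈ codeWeights F n A d) :
    ∑ i, (#(A i) - 1) < w + d := by
  obtain ⟨f, hfd, rfl, hw0⟩ := mem_codeWeights_iff.mp hw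
  have := sum_card_sub_one_lt_card_gridSupport_add_totalDegree
    (card_pos.mp (Nat.pos_of_ne_zero hw0))
  omega

theorem prod_mem_codeWeights (c : Fin n → ℕ) (hc0 : ∀ i, 0 < c i) (hc : ∀ i, c i ≤ #(A i))
    (hd : ∑ i, (#(A i) - c i) ≤ d) : ∏ i, c i ∈ codeWeights F n A d := by
  obtain ⟨f, hfd, hf⟩ := exists_card_gridSupport_eq_prod A c hc
  exact mem_codeWeights_iff.mpr ⟨f, hfd.trans hd, hf.symm, (prod_pos fun i _ ↦ hc0 i).ne'⟩

theorem mem_codeWeights_of_le_card_last {m : ℕ} {A : Fin (m + 1) → Finset F}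
    (hA : ∀ i, (A i).Nonempty) (hw0 : 0 < w) (hw : w ≤ #(A (Fin.last m)))
    (hd : ∑ j : Fin m, (#(A j.castSucc) - 1) + (#(A (Fin.last m)) - w) ≤ d) :
    w ∈ codeWeights F (m + 1) A d := by
  have := prod_mem_codeWeights (A := A) (d := d) (Fin.snoc (fun _ ↦ 1) w)
    (Fin.forall_fin_succ'.mpr ⟨by simp, by simpa using hw0⟩)
    (Fin.forall_fin_succ'.mpr ⟨fun j ↦ by simpa using (hA _).card_pos, by simpa using hw⟩)
    (by simpa [Fin.sum_univ_castSucc] using hd)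
  simpa [Fin.prod_univ_castSucc] using this

end codeWeights

/-- Theorem 4 of the paper: if `∑_{i=1}^{n-1}(d_i-1) ≤ d < ∑_{i=1}^n (d_i-1)`
and `d = ∑_{i=1}^{n-1}(d_i-1) + ℓ` with `0 ≤ ℓ < d_n - 1`, then for each
`t ∈ {1,…,ℓ+1}`, the `t`-th Hamming weight of `C(d)` is `d_n - ℓ + (t-1)`. -/
theorem stmt15 (F : Type*) [Field F] (n : ℕ) (hn : 2 ≤ n)
    (A : Fin n → Finset F) (hcard : ∀ i, 2 ≤ (A i).card)
    (d ℓ : ℕ)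
    (hdec : d = (∑ i : Fin n, if (i : ℕ) < n - 1 then (A i).card - 1 else 0) + ℓ)
    (hℓ : ℓ < (A ⟨n - 1, by omega⟩).card - 1) :
    ∀ t : ℕ, 1 ≤ t → t ≤ ℓ + 1 →
      Nat.nth (fun w => w ∈ codeWeights F n A d) (t - 1) =
        (A ⟨n - 1, by omega⟩).card - ℓ + (t - 1) := by
  classical
  intro t ht1 ht2
  obtain ⟨m, rfl⟩ : ∃ m, n = m + 1 := ⟨n - 1, by omega⟩
  have hlast : (⟨m + 1 - 1, by omega⟩ : Fin (m + 1)) = Fin.last m := Fin.ext (by simp)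
  simp only [hlast, Fin.sum_univ_castSucc, Fin.val_castSucc, Fin.val_last] at hdec hℓ ⊢
  simp only [Fin.is_lt, add_tsub_cancel_right, ite_true, lt_self_iff_false, ite_false,
    add_zero] at hdec
  have hA (i : Fin (m + 1)) : (A i).Nonempty := card_pos.mp (by have := hcard i; omega)
  refine Nat.nth_eq_add_of_Icc_subset (ℓ := ℓ) (fun w hw ↦ ?_) (fun w h1 h2 ↦ ?_) (by omega)
  · have := sum_card_sub_one_lt_add_of_mem_codeWeights hw
    rw [Fin.sum_univ_castSucc] at this
    omega
  · exact mem_codeWeights_of_le_card_last hA (by omega) (by omega) (by omega)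
end

section
/- Let A_1, A_2 ⊆ F_q with 3 ≤ #A_1 = d_1 ≤ d_2 = #A_2 and d ≥ 2. Then the second Hamming weight of C(d) over X = A_1 × A_2 equals: (d_1 − d + 1)(d_2 − 1) if 2 ≤ d < d_1; d_1 + d_2 − d if d_1 ≤ d ≤ d_1 + d_2 − 2; and 2 if d > d_1 + d_2 − 2. -/
open MvPolynomial

/-!
View a bivariate polynomial as `p ∈ F[X][Y]` and count its zeros on `A × B` column by column.
If `p` has total degree `≤ d` and `J := deg_Y p`, the columns on which `p(a, Y) = 0` are roots of
the leading coefficient, of degree `≤ d - J`, and every other column has at most `J` zeros, so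
`weight ≥ (#A - (d - J)) (#B - J)`. After reducing `p` modulo `∏_{b ∈ B} (Y - b)` this gives the
minimum distance `#A + #B - d - 1`, which settles `d ≥ d₁`; for `d < d₁` it gives the dichotomy
`weight = (d₁ - d) d₂` or `weight ≥ (d₁ - d + 1)(d₂ - 1)`, except when `d₁ = d₂` and both `Xᵈ` and
`Yᵈ` occur in `p`, which is handled by dividing `∏_{b ∈ B} (Y - b)` by `p`. Products of linear
forms vanishing on some rows and columns realise the claimed weights.
-/

open Polynomial Polynomial.Bivariate

theorem isLeast_of_forall_eq_or_le {S : Set ℕ} {m s : ℕ} (hm : m ∈ S) (hs : s ∈ S) (hms : m < s)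
    (h : ∀ w ∈ S, w = m ∨ s ≤ w) : IsLeast {w | w ∈ S ∧ sInf S < w} s := by
  have hinf : sInf S = m :=
    IsLeast.csInf_eq ⟨hm, fun w hw => (h w hw).elim ge_of_eq fun hsw => hms.le.trans hsw⟩
  refine ⟨⟨hs, hinf ▸ hms⟩, fun w ⟨hw, hlt⟩ => (h w hw).resolve_left ?_⟩
  omega

-- Counts the zeros in `weight_eq_or_le_of_monic`: `c` columns with at most `m` zeros each and
-- `n - c` with at most `J`.
theorem add_mul_add_sub_mul_le {n m J c : ℕ} (hmn : m < n) (hJm : J < m) (hc : c < n)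
    (hcJ : c + J ≤ n) : c * m + (n - c) * J + (n - m + 1) * (n - 1) ≤ n * n := by
  zify [hmn.le, hc.le, (by omega : 1 ≤ n)]
  rcases Nat.eq_zero_or_pos J with rfl | hJ
  · push_cast
    nlinarith
  · nlinarith [mul_nonneg (show (0 : ℤ) ≤ n - c - J by omega) (show (0 : ℤ) ≤ m - J by omega),
      mul_nonneg (show (0 : ℤ) ≤ J - 1 by omega) (show (0 : ℤ) ≤ m - J - 1 by omega)]

namespace Polynomial.Bivariate

section TotalDegree

variable {R : Type*} [CommRing R]

variable (R) in
/-- Bivariate polynomials of total degree at most `n`; `(p.coeff j).coeff i` is the coefficient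
of `XⁱYʲ`. -/
def totalDegreeLE (n : ℕ) : Submodule R R[X][Y] where
  carrier := {p | ∀ i j, n < i + j → (p.coeff j).coeff i = 0}
  add_mem' hp hq i j h := by simp [hp i j h, hq i j h]
  zero_mem' _ _ _ := by simp
  smul_mem' c p hp i j h := by simp [hp i j h]

variable {m n : ℕ} {p q : R[X][Y]}

theorem totalDegreeLE_mono (h : m ≤ n) : totalDegreeLE R m ≤ totalDegreeLE R n :=
  fun _ hp i j hij => hp i j (by omega)

theorem C_mem_totalDegreeLE (u : R[X]) : C u ∈ totalDegreeLE R u.natDegree := by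
  intro i j hij
  rcases j with _ | j
  · exact coeff_eq_zero_of_natDegree_lt (by simp only [coeff_C_zero]; omega)
  · simp

theorem X_pow_mem_totalDegreeLE (k : ℕ) : (X : R[X][Y]) ^ k ∈ totalDegreeLE R k := by
  intro i j hij
  rw [coeff_X_pow]
  split_ifs with h
  · subst h
    exact coeff_eq_zero_of_natDegree_lt (by simp; omega)
  · simp

theorem mul_mem_totalDegreeLE (hp : p ∈ totalDegreeLE R m) (hq : q ∈ totalDegreeLE R n) :
    p * q ∈ totalDegreeLE R (m + n) := by
  intro i j hij
  rw [coeff_mul, finsetSum_coeff]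
  refine Finset.sum_eq_zero fun x hx => ?_
  rw [Finset.HasAntidiagonal.mem_antidiagonal] at hx
  rw [coeff_mul]
  refine Finset.sum_eq_zero fun y hy => ?_
  rw [Finset.HasAntidiagonal.mem_antidiagonal] at hy
  by_cases h : m < y.1 + x.1
  · rw [hp _ _ h, zero_mul]
  · rw [hq _ _ (by omega), mul_zero]

theorem natDegree_le_of_mem_totalDegreeLE (hp : p ∈ totalDegreeLE R n) : p.natDegree ≤ n :=
  natDegree_le_iff_coeff_eq_zero.2 fun j hj => Polynomial.ext fun i => by
    simpa using hp i j (by omega)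

theorem natDegree_coeff_le_of_mem_totalDegreeLE (hp : p ∈ totalDegreeLE R n) (j : ℕ) :
    (p.coeff j).natDegree ≤ n - j :=
  natDegree_le_iff_coeff_eq_zero.2 fun i hi => hp i j (by omega)

theorem coeff_coeff_swap (p : R[X][Y]) (i j : ℕ) :
    ((swap p).coeff i).coeff j = (p.coeff j).coeff i := by
  induction p using Polynomial.induction_on' with
  | add p q hp hq => simp [hp, hq]
  | monomial n u =>
    induction u using Polynomial.induction_on' with
    | add u v hu hv => simp [hu, hv]
    | monomial m r =>
      rw [swap_monomial_monomial]
      simp only [coeff_monomial]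
      split_ifs <;> simp [coeff_monomial, *]

theorem evalEval_swap (a b : R) (p : R[X][Y]) : (swap p).evalEval a b = p.evalEval b a := by
  rw [← coe_aevalAeval_eq_evalEval, ← coe_aevalAeval_eq_evalEval, aevalAeval_swap]

theorem eval_equivMvPolynomial (x : Fin 2 → R) (p : R[X][Y]) :
    MvPolynomial.eval x (equivMvPolynomial R p) = p.evalEval (x 0) (x 1) := by
  have : (MvPolynomial.eval x).comp (equivMvPolynomial R).toRingHom =
      evalEvalRingHom (x 0) (x 1) := by
    ext <;> simp
  exact congr($this p)

theorem swap_mem_totalDegreeLE (hp : p ∈ totalDegreeLE R n) : swap p ∈ totalDegreeLE R n :=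
  fun i j hij => by rw [coeff_coeff_swap]; exact hp j i (by omega)

theorem equivMvPolynomial_symm_monomial (v : Fin 2 →₀ ℕ) (c : R) :
    (equivMvPolynomial R).symm (MvPolynomial.monomial v c) = C (C c * X ^ v 0) * X ^ v 1 := by
  rw [MvPolynomial.monomial_eq, Finsupp.prod_fintype _ _ (by simp), Fin.prod_univ_two]
  simp [mul_assoc]

theorem equivMvPolynomial_symm_mem_totalDegreeLE {f : MvPolynomial (Fin 2) R}
    (hf : f.totalDegree ≤ n) : (equivMvPolynomial R).symm f ∈ totalDegreeLE R n := by
  rw [f.as_sum, map_sum]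
  refine Submodule.sum_mem _ fun v hv => ?_
  rw [equivMvPolynomial_symm_monomial]
  have hv : v 0 + v 1 ≤ n := by
    have := MvPolynomial.le_totalDegree hv
    rw [Finsupp.sum_fintype _ _ (by simp), Fin.sum_univ_two] at this
    omega
  have := natDegree_C_mul_X_pow_le (MvPolynomial.coeff v f) (v 0)
  exact totalDegreeLE_mono (by omega)
    (mul_mem_totalDegreeLE (C_mem_totalDegreeLE _) (X_pow_mem_totalDegreeLE _))

/-- Division by a monic `G` whose leading term `Yᵐ` carries its total degree does not raise
the total degree: each step of the long division subtracts a multiple `c(X) Yᵏ G` of total degree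
at most that of the dividend. -/
theorem modByMonic_mem_totalDegreeLE [Nontrivial R] {G : R[X][Y]} (hG : G.Monic)
    (hGm : G ∈ totalDegreeLE R G.natDegree) (hp : p ∈ totalDegreeLE R n) :
    p %ₘ G ∈ totalDegreeLE R n := by
  induction hk : p.natDegree using Nat.strong_induction_on generalizing p with
  | _ k ih =>
  by_cases hlt : p.degree < G.degree
  · rwa [(modByMonic_eq_self_iff hG).2 hlt]
  have hp0 : p ≠ 0 := by
    rintro rfl
    exact hlt (by simpa [bot_lt_iff_ne_bot] using hG.ne_zero)
  have hGp : G.natDegree ≤ p.natDegree := natDegree_le_natDegree (not_lt.1 hlt)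
  have hpn := natDegree_le_of_mem_totalDegreeLE hp
  have hlc : p.leadingCoeff.natDegree ≤ n - p.natDegree :=
    natDegree_coeff_le_of_mem_totalDegreeLE hp _
  set M := C p.leadingCoeff * X ^ (p.natDegree - G.natDegree)
  have hM : M ∈ totalDegreeLE R (n - G.natDegree) :=
    totalDegreeLE_mono (by omega)
      (mul_mem_totalDegreeLE (C_mem_totalDegreeLE _) (X_pow_mem_totalDegreeLE _))
  have hsub : p - G * M ∈ totalDegreeLE R n :=
    sub_mem hp (totalDegreeLE_mono (by omega) (mul_mem_totalDegreeLE hGm hM))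
  rw [modByMonic_eq_of_dvd_sub hG (by simp : G ∣ p - (p - G * M))]
  by_cases h0 : p - G * M = 0
  · rw [h0, zero_modByMonic]
    exact zero_mem _
  exact ih _ (hk ▸ natDegree_lt_natDegree h0 (div_wf_lemma ⟨not_lt.1 hlt, hp0⟩ hG)) hsub rfl

end TotalDegree

section Field

open Finset

variable {F : Type*} [Field F] {B : Finset F} {p : F[X][Y]}

/-- `∏_{b ∈ B} (Y - b)`. -/
noncomputable def nodalY (B : Finset F) : F[X][Y] :=
  (Lagrange.nodal B id).map C

theorem nodalY_monic (B : Finset F) : (nodalY B).Monic :=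
  Lagrange.nodal_monic.map C

theorem natDegree_nodalY (B : Finset F) : (nodalY B).natDegree = #B := by
  rw [nodalY, Lagrange.nodal_monic.natDegree_map, Lagrange.natDegree_nodal]

theorem nodalY_mem_totalDegreeLE (B : Finset F) : nodalY B ∈ totalDegreeLE F #B := by
  rw [nodalY, ← swap_C, ← Lagrange.natDegree_nodal (v := id)]
  exact swap_mem_totalDegreeLE (C_mem_totalDegreeLE _)

theorem evalEval_nodalY {a b : F} (hb : b ∈ B) : (nodalY B).evalEval a b = 0 := by
  rw [nodalY, evalEval_map_C]
  exact Lagrange.eval_nodal_at_node (v := id) hb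

theorem map_evalRingHom_nodalY (a : F) (B : Finset F) :
    (nodalY B).map (evalRingHom a) = Lagrange.nodal B id := by
  rw [nodalY, Polynomial.map_map,
    show (evalRingHom a).comp C = RingHom.id F from RingHom.ext fun _ => eval_C, Polynomial.map_id]

theorem nodalY_modByMonic_ne_zero (hp : p.Monic) (hx : (swap p).natDegree ≠ 0) :
    nodalY B %ₘ p ≠ 0 := by
  intro h
  have hG : p * (nodalY B /ₘ p) = nodalY B := by
    simpa [h] using modByMonic_add_div (nodalY B) p
  have hq : nodalY B /ₘ p ≠ 0 := by
    rintro hq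
    rw [hq, mul_zero] at hG
    exact (nodalY_monic B).ne_zero hG.symm
  have := congrArg (natDegree ∘ swap) hG
  simp only [Function.comp, map_mul, nodalY, swap_map_C, natDegree_C] at this hq
  rw [natDegree_mul (by simpa using hp.ne_zero) (by simpa using hq)] at this
  omega

theorem exists_monic_CC_mul {n : ℕ} (hp : p ∈ totalDegreeLE F n) (hpn : p.natDegree = n)
    (hp0 : p ≠ 0) : ∃ c : F, c ≠ 0 ∧ (CC c * p).Monic := by
  obtain ⟨c, hlc⟩ : ∃ c, p.leadingCoeff = C c := ⟨_, eq_C_of_natDegree_eq_zero <| by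
    have : p.leadingCoeff.natDegree ≤ n - p.natDegree :=
      natDegree_coeff_le_of_mem_totalDegreeLE hp _
    omega⟩
  have hc : c ≠ 0 := fun h => hp0 (leadingCoeff_eq_zero.1 (by rw [hlc, h, C_0]))
  refine ⟨c⁻¹, inv_ne_zero hc, ?_⟩
  rw [Monic, leadingCoeff_mul, leadingCoeff_C, hlc, ← C_mul, inv_mul_cancel₀ hc, C_1]

end Field

section Weight

open Finset

variable {F : Type*} [Field F] [DecidableEq F] {A B : Finset F} {p q : F[X][Y]}

theorem card_filter_eval_eq_zero_le {u : F[X]} (hu : u ≠ 0) (B : Finset F) :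
    #{b ∈ B | u.eval b = 0} ≤ u.natDegree :=
  card_le_degree_of_subset_roots fun _ hb => (mem_roots hu).2 (mem_filter.1 hb).2

/-- The Hamming weight of the codeword of `p` on the grid `A × B`, counted column by column. -/
noncomputable def weight (A B : Finset F) (p : F[X][Y]) : ℕ :=
  ∑ a ∈ A, #{b ∈ B | p.evalEval a b ≠ 0}

/-- The columns `a ∈ A` on which `p(a, Y)` is the zero polynomial, not merely zero on `B`. -/
noncomputable def zeroColumns (A : Finset F) (p : F[X][Y]) : Finset F :=
  {a ∈ A | p.map (evalRingHom a) = 0}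

theorem mem_zeroColumns {a : F} : a ∈ zeroColumns A p ↔ a ∈ A ∧ p.map (evalRingHom a) = 0 :=
  mem_filter

theorem weight_congr (h : ∀ a ∈ A, ∀ b ∈ B, p.evalEval a b = q.evalEval a b) :
    weight A B p = weight A B q :=
  sum_congr rfl fun a ha => congrArg card (filter_congr fun b hb => by rw [h a ha b hb])

@[simp] theorem weight_zero : weight A B (0 : F[X][Y]) = 0 := by
  simp [weight]

theorem weight_swap : weight B A (swap p) = weight A B p := by
  simp only [weight, card_filter, evalEval_swap]
  exact sum_comm

theorem weight_CC_mul {c : F} (hc : c ≠ 0) : weight A B (CC c * p) = weight A B p :=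
  sum_congr rfl fun a _ => congrArg card (filter_congr fun b _ => by simp [hc])

theorem weight_eq_card_mul_card {u v : F → F} (h : ∀ a b, p.evalEval a b = u a * v b) :
    weight A B p = #{a ∈ A | u a ≠ 0} * #{b ∈ B | v b ≠ 0} := by
  calc weight A B p = ∑ a ∈ A, if u a ≠ 0 then #{b ∈ B | v b ≠ 0} else 0 :=
        sum_congr rfl fun a _ => by split_ifs with ha <;> simp [h, ha]
    _ = _ := by rw [sum_ite, sum_const_zero, add_zero, sum_const, smul_eq_mul]

theorem card_filter_evalEval_eq_zero_le {a : F} (ha : p.map (evalRingHom a) ≠ 0) (B : Finset F) :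
    #{b ∈ B | p.evalEval a b = 0} ≤ p.natDegree := by
  simp_rw [← map_evalRingHom_eval]
  exact (card_filter_eval_eq_zero_le ha B).trans natDegree_map_le

theorem card_filter_evalEval_ne_zero_add (a : F) (B : Finset F) (p : F[X][Y]) :
    #{b ∈ B | p.evalEval a b ≠ 0} + #{b ∈ B | p.evalEval a b = 0} = #B := by
  simpa using card_filter_add_card_filter_not (s := B) (fun b => p.evalEval a b ≠ 0)

theorem card_filter_not_mem_zeroColumns (A : Finset F) (p : F[X][Y]) :
    #{a ∈ A | p.map (evalRingHom a) ≠ 0} = #A - #(zeroColumns A p) := by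
  have := card_filter_add_card_filter_not (s := A) (fun a => p.map (evalRingHom a) = 0)
  simp only [← ne_eq] at this
  rw [zeroColumns]
  omega

theorem weight_le_card_sub_mul_card :
    weight A B p ≤ (#A - #(zeroColumns A p)) * #B := by
  rw [weight, ← sum_filter_add_sum_filter_not A (fun a => p.map (evalRingHom a) = 0),
    sum_eq_zero (fun a ha => ?_), zero_add, ← card_filter_not_mem_zeroColumns, ← smul_eq_mul]
  · exact sum_le_card_nsmul _ _ _ fun a _ => card_filter_le _ _
  · simp [← map_evalRingHom_eval, (mem_filter.1 ha).2]

theorem card_sub_mul_card_sub_le_weight :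
    (#A - #(zeroColumns A p)) * (#B - p.natDegree) ≤ weight A B p := by
  rw [← card_filter_not_mem_zeroColumns, ← smul_eq_mul]
  refine (card_nsmul_le_sum _ _ _ fun a ha => ?_).trans
    (sum_le_sum_of_subset (filter_subset _ A))
  have := card_filter_evalEval_eq_zero_le (mem_filter.1 ha).2 B
  have := card_filter_evalEval_ne_zero_add a B p
  omega

theorem card_zeroColumns_le (hp : p ≠ 0) : #(zeroColumns A p) ≤ p.leadingCoeff.natDegree := by
  refine (card_le_card fun a ha => ?_).trans
    (card_filter_eval_eq_zero_le (leadingCoeff_ne_zero.2 hp) A)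
  obtain ⟨haA, hcol⟩ := mem_zeroColumns.1 ha
  exact mem_filter.2 ⟨haA, by simpa using congrArg (coeff · p.natDegree) hcol⟩

theorem ne_zero_of_weight_ne_zero (h : weight A B p ≠ 0) : p ≠ 0 := by
  rintro rfl
  exact h weight_zero

theorem weight_modByMonic_nodalY : weight A B (p %ₘ nodalY B) = weight A B p :=
  weight_congr fun a _ b hb => by
    rw [modByMonic_eq_sub_mul_div, evalEval_sub, evalEval_mul,
      evalEval_nodalY hb, zero_mul, sub_zero]

theorem card_add_card_le_weight_add {d : ℕ} (hp : p ∈ totalDegreeLE F d)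
    (hw : weight A B p ≠ 0) : #A + #B ≤ weight A B p + d + 1 := by
  set r := p %ₘ nodalY B
  have hwr : weight A B r = weight A B p := weight_modByMonic_nodalY
  have hr : r ∈ totalDegreeLE F d := modByMonic_mem_totalDegreeLE (nodalY_monic B)
    ((natDegree_nodalY B).symm ▸ nodalY_mem_totalDegreeLE B) hp
  have hr0 : r ≠ 0 := ne_zero_of_weight_ne_zero (hwr ▸ hw)
  have hJ : r.natDegree < #B := natDegree_nodalY B ▸
    natDegree_lt_natDegree hr0 (degree_modByMonic_lt _ (nodalY_monic B))
  have hz : #(zeroColumns A r) ≤ d - r.natDegree :=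
    (card_zeroColumns_le hr0).trans (natDegree_coeff_le_of_mem_totalDegreeLE hr _)
  have hlow := card_sub_mul_card_sub_le_weight (A := A) (B := B) (p := r)
  have hup := weight_le_card_sub_mul_card (A := A) (B := B) (p := r)
  rw [hwr] at hlow hup
  have hcols : 1 ≤ #A - #(zeroColumns A r) := by
    by_contra h
    exact hw (Nat.le_zero.1 (by simpa [show #A - #(zeroColumns A r) = 0 by omega] using hup))
  have hd := natDegree_le_of_mem_totalDegreeLE hr
  have hsum : ∀ u v : ℕ, 1 ≤ u → 1 ≤ v → u + v ≤ u * v + 1 := fun u v hu hv => by nlinarith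
  have := hsum _ (#B - r.natDegree) hcols (by omega)
  omega

theorem weight_add_sum_card_filter_eq_zero (A B : Finset F) (p : F[X][Y]) :
    weight A B p + ∑ a ∈ A, #{b ∈ B | p.evalEval a b = 0} = #A * #B := by
  rw [weight, ← sum_add_distrib, sum_congr rfl fun a _ => card_filter_evalEval_ne_zero_add a B p,
    sum_const, smul_eq_mul]

/-- With `J := deg_Y p`, the column bound `(#A - d + J)(#B - J)` reaches `(#A - d + 1)(#B - 1)`
unless `J = 0` (where the weight is exactly `(#A - #zeroColumns) #B`) or `J = d` and `#A = #B`. -/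
theorem weight_eq_or_le_of_natDegree {d : ℕ} (hp : p ∈ totalDegreeLE F d) (hp0 : p ≠ 0)
    (hdA : d < #A) (hAB : #A ≤ #B) (hJ : p.natDegree = 0 ∨ p.natDegree < d ∨ #A < #B) :
    weight A B p = (#A - d) * #B ∨ (#A - d + 1) * (#B - 1) ≤ weight A B p := by
  have hz : #(zeroColumns A p) ≤ d - p.natDegree :=
    (card_zeroColumns_le hp0).trans (natDegree_coeff_le_of_mem_totalDegreeLE hp _)
  have hlow := card_sub_mul_card_sub_le_weight (A := A) (B := B) (p := p)
  have hJd := natDegree_le_of_mem_totalDegreeLE hp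
  rcases Nat.eq_zero_or_pos p.natDegree with hJ0 | hJpos
  · have hup := weight_le_card_sub_mul_card (A := A) (B := B) (p := p)
    rw [hJ0, Nat.sub_zero] at hlow hz
    rcases hz.eq_or_lt with hzd | hzd
    · rw [hzd] at hlow hup
      exact Or.inl (le_antisymm hup hlow)
    · exact Or.inr <| (Nat.mul_le_mul (by omega) (Nat.sub_le _ _)).trans hlow
  · refine Or.inr <| le_trans ?_ <| (Nat.mul_le_mul_right _ (by omega : #A - d + p.natDegree ≤
      #A - #(zeroColumns A p))).trans hlow
    have hJ' : p.natDegree < d ∨ #A < #B := by omega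
    zify [hdA.le, (by omega : 1 ≤ #B), (by omega : p.natDegree ≤ #B)]
    nlinarith [mul_nonneg (show (0 : ℤ) ≤ p.natDegree - 1 by omega)
      (show (0 : ℤ) ≤ #B - #A + d - p.natDegree - 1 by omega)]

theorem card_filter_evalEval_eq_zero_le_natDegree_modByMonic {a : F}
    (ha : (nodalY B %ₘ p).map (evalRingHom a) ≠ 0) :
    #{b ∈ B | p.evalEval a b = 0} ≤ (nodalY B %ₘ p).natDegree := by
  refine (card_le_card fun b hb => ?_).trans (card_filter_evalEval_eq_zero_le ha B)
  rw [mem_filter] at hb ⊢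
  rw [modByMonic_eq_sub_mul_div, evalEval_sub, evalEval_mul, evalEval_nodalY hb.1, hb.2,
    zero_mul, sub_zero]
  exact ⟨hb.1, rfl⟩

/-- On a column where `nodalY B %ₘ p` vanishes, the column of `p` divides `∏_{b ∈ B} (Y - b)`,
so it has `deg_Y p` distinct zeros in `B`. -/
theorem natDegree_le_card_filter_evalEval_eq_zero (hp : p.Monic) {a : F}
    (ha : (nodalY B %ₘ p).map (evalRingHom a) = 0) :
    p.natDegree ≤ #{b ∈ B | p.evalEval a b = 0} := by
  set q := nodalY B /ₘ p
  have hcol : p.map (evalRingHom a) * q.map (evalRingHom a) = Lagrange.nodal B id := by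
    have := congrArg (Polynomial.map (evalRingHom a)) (modByMonic_add_div (nodalY B) p)
    rwa [Polynomial.map_add, ha, zero_add, Polynomial.map_mul, map_evalRingHom_nodalY] at this
  have hq : q.map (evalRingHom a) ≠ 0 := by
    intro h
    rw [h, mul_zero] at hcol
    exact Lagrange.nodal_monic.ne_zero hcol.symm
  have hpB : p.natDegree ≤ #B := by
    by_contra h
    refine hq ?_
    rw [show q = 0 from (divByMonic_eq_zero_iff hp).2 (degree_lt_degree
      ((natDegree_nodalY B).trans_lt (not_le.1 h))), Polynomial.map_zero]
  have hcover : #B ≤ #{b ∈ B | p.evalEval a b = 0} + #{b ∈ B | q.evalEval a b = 0} := by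
    refine (card_le_card fun b hb => ?_).trans (card_union_le _ _)
    have := congrArg (eval b) hcol
    rw [eval_mul, map_evalRingHom_eval, map_evalRingHom_eval,
      show eval b (Lagrange.nodal B id) = 0 from Lagrange.eval_nodal_at_node (v := id) hb] at this
    rcases mul_eq_zero.1 this with h | h <;> simp [hb, h]
  have hqB := card_filter_evalEval_eq_zero_le hq B
  rw [natDegree_divByMonic _ hp, natDegree_nodalY] at hqB
  omega

/-- Write `∏_{b ∈ B} (Y - b) = p q + r`; every zero of `p` on the grid is a zero of `r ≠ 0`, and
`J := deg_Y r < m`. At most `n - J` columns of `r` vanish; on those `p` has at most `m` zeros, on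
the others at most `J`. This forces the bound, unless `r` vanishes on all `n` columns, where `p`
has exactly `m` zeros in each. -/
theorem weight_eq_or_le_of_monic {m n : ℕ} (hA : #A = n) (hB : #B = n) (hp : p.Monic)
    (hpm : p.natDegree = m) (hpd : p ∈ totalDegreeLE F m) (hmn : m < n)
    (hx : (swap p).natDegree ≠ 0) :
    weight A B p = (n - m) * n ∨ (n - m + 1) * (n - 1) ≤ weight A B p := by
  set r := nodalY B %ₘ p
  have hr0 : r ≠ 0 := nodalY_modByMonic_ne_zero hp hx
  have hr : r ∈ totalDegreeLE F n := modByMonic_mem_totalDegreeLE hp (hpm ▸ hpd)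
    (hB ▸ nodalY_mem_totalDegreeLE B)
  have hJm : r.natDegree < m := hpm ▸ natDegree_lt_natDegree hr0 (degree_modByMonic_lt _ hp)
  have hc : #(zeroColumns A r) ≤ n - r.natDegree :=
    (card_zeroColumns_le hr0).trans (natDegree_coeff_le_of_mem_totalDegreeLE hr _)
  have hcol (a : F) : #{b ∈ B | p.evalEval a b = 0} ≤ m :=
    hpm ▸ card_filter_evalEval_eq_zero_le (hp.map _).ne_zero B
  have htotal := weight_add_sum_card_filter_eq_zero A B p
  rw [hA, hB] at htotal
  by_cases hall : #(zeroColumns A r) = n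
  · have hzA : zeroColumns A r = A := eq_of_subset_of_card_le (filter_subset _ _) (by omega)
    have hsum : ∑ a ∈ A, #{b ∈ B | p.evalEval a b = 0} = n * m := by
      rw [sum_congr rfl fun a ha => (hcol a).antisymm (hpm ▸
        natDegree_le_card_filter_evalEval_eq_zero hp (mem_zeroColumns.1 (by rwa [hzA])).2),
        sum_const, smul_eq_mul, hA]
    rw [Nat.sub_mul, mul_comm m n]
    omega
  · have hsum : ∑ a ∈ A, #{b ∈ B | p.evalEval a b = 0} ≤
        #(zeroColumns A r) * m + (n - #(zeroColumns A r)) * r.natDegree := by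
      rw [← sum_filter_add_sum_filter_not A (fun a => r.map (evalRingHom a) = 0)]
      refine add_le_add ((sum_le_card_nsmul _ _ m fun a _ => hcol a).trans_eq (smul_eq_mul ..))
        ((sum_le_card_nsmul _ _ _ fun a ha =>
          card_filter_evalEval_eq_zero_le_natDegree_modByMonic (mem_filter.1 ha).2).trans_eq ?_)
      rw [card_filter_not_mem_zeroColumns, hA, smul_eq_mul]
    have := add_mul_add_sub_mul_le hmn hJm (by omega : #(zeroColumns A r) < n) (by omega)
    exact Or.inr (by omega)

theorem weight_eq_or_le_of_lt_card {d : ℕ} (hp : p ∈ totalDegreeLE F d) (hdA : d < #A)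
    (hAB : #A ≤ #B) (hw : weight A B p ≠ 0) :
    weight A B p = (#A - d) * #B ∨ (#A - d + 1) * (#B - 1) ≤ weight A B p := by
  have hp0 := ne_zero_of_weight_ne_zero hw
  by_cases hY : p.natDegree = 0 ∨ p.natDegree < d ∨ #A < #B
  · exact weight_eq_or_le_of_natDegree hp hp0 hdA hAB hY
  have hpd : p.natDegree = d := by
    have := natDegree_le_of_mem_totalDegreeLE hp
    omega
  have hBA : #B = #A := by omega
  by_cases hX : (swap p).natDegree = 0 ∨ (swap p).natDegree < d
  · simpa only [weight_swap, hBA] using weight_eq_or_le_of_natDegree (A := B) (B := A)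
      (swap_mem_totalDegreeLE hp) (by simpa using hp0) (hBA ▸ hdA) hBA.le (by tauto)
  obtain ⟨c, hc, hmonic⟩ := exists_monic_CC_mul hp hpd hp0
  have hc' : (C c : F[X]) ≠ 0 := C_ne_zero.2 hc
  have := weight_eq_or_le_of_monic (A := A) (B := B) rfl hBA hmonic
    ((natDegree_C_mul hc').trans hpd)
    (by simpa using mul_mem_totalDegreeLE (C_mem_totalDegreeLE (C c)) hp) hdA
    (by rw [map_mul, swap_C_C, natDegree_C_mul hc']; omega)
  rw [hBA]
  rwa [weight_CC_mul hc] at this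

end Weight

end Polynomial.Bivariate

section CodeWeights

open Finset

variable {F : Type*} [Field F]

theorem totalDegree_prod_X_sub_C_le (i : Fin 2) (S : Finset F) :
    (∏ s ∈ S, (MvPolynomial.X i - MvPolynomial.C s) : MvPolynomial (Fin 2) F).totalDegree ≤ #S :=
  (MvPolynomial.totalDegree_finsetProd _ _).trans <| by
    simpa using sum_le_card_nsmul S _ 1 fun s _ =>
      (MvPolynomial.totalDegree_sub_C_le _ _).trans (MvPolynomial.totalDegree_X i).le

variable [DecidableEq F]

theorem ncard_eq_weight (A : Fin 2 → Finset F) (f : MvPolynomial (Fin 2) F) :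
    {x : Fin 2 → F | (∀ i, x i ∈ A i) ∧ MvPolynomial.eval x f ≠ 0}.ncard =
      weight (A 0) (A 1) ((equivMvPolynomial F).symm f) := by
  set g := (equivMvPolynomial F).symm f
  have hf (x : Fin 2 → F) : MvPolynomial.eval x f = g.evalEval (x 0) (x 1) := by
    rw [← eval_equivMvPolynomial, AlgEquiv.apply_symm_apply]
  calc _ = (↑{ab ∈ A 0 ×ˢ A 1 | g.evalEval ab.1 ab.2 ≠ 0} : Set (F × F)).ncard := by
        refine Set.ncard_congr (fun x _ => (x 0, x 1)) (fun x hx => ?_) (fun x y _ _ h => ?_)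
          (fun ab hab => ⟨![ab.1, ab.2], ?_, rfl⟩)
        · simp_all [Fin.forall_fin_two]
        · simp only [Prod.mk.injEq] at h
          ext i; fin_cases i <;> simp [h.1, h.2]
        · simp_all [Fin.forall_fin_two]
    _ = weight (A 0) (A 1) g := by
        rw [Set.ncard_coe_finset, card_filter, sum_product]
        simp [weight, card_filter]

theorem exists_weight_eq_of_mem_codeWeights {A : Fin 2 → Finset F} {d w : ℕ}
    (hw : w ∈ codeWeights F 2 A d) :
    ∃ p ∈ totalDegreeLE F d, weight (A 0) (A 1) p = w ∧ w ≠ 0 := by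
  obtain ⟨f, hf, rfl, hw0⟩ := hw
  exact ⟨_, equivMvPolynomial_symm_mem_totalDegreeLE hf, (ncard_eq_weight A f).symm, hw0⟩

theorem card_filter_prod_sub_ne_zero {A S : Finset F} (hS : S ⊆ A) :
    #{a ∈ A | ∏ s ∈ S, (a - s) ≠ 0} = #A - #S := by
  rw [← card_sdiff_of_subset hS]
  congr 1
  ext a
  simp [prod_ne_zero_iff, sub_eq_zero]

/-- Witness: `∏_{s ∈ S} (x₀ - s) ∏_{t ∈ T} (x₁ - t)` with `S ⊆ A 0`, `T ⊆ A 1` of sizes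
`#(A 0) - u` and `#(A 1) - v` is nonzero exactly on the rectangle `(A 0 \ S) × (A 1 \ T)`. -/
theorem mul_mem_codeWeights (A : Fin 2 → Finset F) {u v d : ℕ} (hu : u ≤ #(A 0))
    (hv : v ≤ #(A 1)) (hd : #(A 0) + #(A 1) ≤ u + v + d) (huv : u * v ≠ 0) :
    u * v ∈ codeWeights F 2 A d := by
  obtain ⟨S, hSA, hS⟩ := exists_subset_card_eq (show #(A 0) - u ≤ #(A 0) by omega)
  obtain ⟨T, hTA, hT⟩ := exists_subset_card_eq (show #(A 1) - v ≤ #(A 1) by omega)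
  set f : MvPolynomial (Fin 2) F := (∏ s ∈ S, (MvPolynomial.X 0 - MvPolynomial.C s)) *
    ∏ t ∈ T, (MvPolynomial.X 1 - MvPolynomial.C t)
  refine ⟨f, ?_, ?_, huv⟩
  · refine (MvPolynomial.totalDegree_mul _ _).trans <|
      (add_le_add (totalDegree_prod_X_sub_C_le 0 S) (totalDegree_prod_X_sub_C_le 1 T)).trans ?_
    omega
  · rw [ncard_eq_weight, weight_eq_card_mul_card (u := fun a => ∏ s ∈ S, (a - s))
      (v := fun b => ∏ t ∈ T, (b - t)), card_filter_prod_sub_ne_zero hSA,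
      card_filter_prod_sub_ne_zero hTA, hS, hT, Nat.sub_sub_self hu, Nat.sub_sub_self hv]
    intro a b
    have := eval_equivMvPolynomial ![a, b] ((equivMvPolynomial F).symm f)
    rw [AlgEquiv.apply_symm_apply] at this
    simp only [Matrix.cons_val_zero, Matrix.cons_val_one] at this
    rw [← this]
    simp [f]

end CodeWeights

theorem stmt16_general (F : Type*) [Field F]
    (A : Fin 2 → Finset F) (d₁ d₂ : ℕ)
    (hA1 : (A 0).card = d₁) (hA2 : (A 1).card = d₂)
    (h3 : 3 ≤ d₁) (h12 : d₁ ≤ d₂) (d : ℕ) (hd2 : 2 ≤ d) :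
    (d < d₁ →
      IsLeast {w | w ∈ codeWeights F 2 A d ∧ sInf (codeWeights F 2 A d) < w}
        ((d₁ - d + 1) * (d₂ - 1))) ∧
    (d₁ ≤ d → d ≤ d₁ + d₂ - 2 →
      IsLeast {w | w ∈ codeWeights F 2 A d ∧ sInf (codeWeights F 2 A d) < w}
        (d₁ + d₂ - d)) ∧
    (d₁ + d₂ - 2 < d →
      IsLeast {w | w ∈ codeWeights F 2 A d ∧ sInf (codeWeights F 2 A d) < w}
        2) := by
  classical
  have rect : ∀ u v, u ≤ d₁ → v ≤ d₂ → d₁ + d₂ ≤ u + v + d → u * v ≠ 0 →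
      u * v ∈ codeWeights F 2 A d := by
    subst hA1 hA2
    exact fun u v => mul_mem_codeWeights A
  refine ⟨fun hd => ?_, fun hd hd' => ?_, fun hd => ?_⟩
  · have hlt : (d₁ - d) * d₂ < (d₁ - d + 1) * (d₂ - 1) := by
      zify [hd.le, (by omega : 1 ≤ d₂)]
      nlinarith
    refine isLeast_of_forall_eq_or_le
      (rect _ _ (by omega) le_rfl (by omega) (Nat.mul_ne_zero (by omega) (by omega)))
      (rect _ _ (by omega) (by omega) (by omega) (Nat.mul_ne_zero (by omega) (by omega))) hlt
      fun w hw => ?_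
    obtain ⟨p, hp, rfl, hw0⟩ := exists_weight_eq_of_mem_codeWeights hw
    simpa [hA1, hA2] using weight_eq_or_le_of_lt_card hp (hA1 ▸ hd) (hA1 ▸ hA2 ▸ h12) hw0
  · refine isLeast_of_forall_eq_or_le (m := d₁ + d₂ - d - 1)
      (by simpa using rect 1 (d₁ + d₂ - d - 1) (by omega) (by omega) (by omega) (by omega))
      (by simpa using rect 1 (d₁ + d₂ - d) (by omega) (by omega) (by omega) (by omega))
      (by omega) fun w hw => ?_
    obtain ⟨p, hp, rfl, hw0⟩ := exists_weight_eq_of_mem_codeWeights hw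
    have := card_add_card_le_weight_add hp hw0
    omega
  · refine isLeast_of_forall_eq_or_le (m := 1)
      (rect 1 1 (by omega) (by omega) (by omega) one_ne_zero)
      (rect 1 2 (by omega) (by omega) (by omega) two_ne_zero) one_lt_two fun w hw => ?_
    obtain ⟨p, hp, rfl, hw0⟩ := exists_weight_eq_of_mem_codeWeights hw
    omega

/-- Corollary 1 of the paper: the second Hamming weight of `C(d)` over
`X = A_1 × A_2` with `3 ≤ d_1 ≤ d_2` and `d ≥ 2`, in all three ranges of `d`. -/
theorem stmt16 (F : Type*) [Field F] [Fintype F]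
    (A : Fin 2 → Finset F) (d₁ d₂ : ℕ)
    (hA1 : (A 0).card = d₁) (hA2 : (A 1).card = d₂)
    (h3 : 3 ≤ d₁) (h12 : d₁ ≤ d₂) (d : ℕ) (hd2 : 2 ≤ d) :
    (d < d₁ →
      IsLeast {w | w ∈ codeWeights F 2 A d ∧ sInf (codeWeights F 2 A d) < w}
        ((d₁ - d + 1) * (d₂ - 1))) ∧
    (d₁ ≤ d → d ≤ d₁ + d₂ - 2 →
      IsLeast {w | w ∈ codeWeights F 2 A d ∧ sInf (codeWeights F 2 A d) < w}
        (d₁ + d₂ - d)) ∧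
    (d₁ + d₂ - 2 < d →
      IsLeast {w | w ∈ codeWeights F 2 A d ∧ sInf (codeWeights F 2 A d) < w}
        2) :=
  stmt16_general F A d₁ d₂ hA1 hA2 h3 h12 d hd2
end

section
/- Let t, a, d_2, …, d_n be positive integers with 2 ≤ t < a ≤ d_i for all i ≥ 2, where all d_i = a, and consider tuples (b_1, …, b_n) of integers with 0 ≤ b_1 < t, 0 ≤ b_i < a for i ≥ 2, and b_1 + ⋯ + b_n ≤ a. Then the minimum of (t − b_1) Π_{i=2}^n (a − b_i) over such tuples equals (t − 1)a^{n−2}, i.e., (t − b_1) Π_{i=2}^n (a − b_i) ≥ (t − 1)a^{n−2} for all such tuples (obtained by applying the general minimization with sequence (t, a, …, a) and s = a = (t − 1) + (a − t + 1)). -/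
private lemma key19 (a x y : ℕ) (h : x + y ≤ a) : a * (a - (x + y)) ≤ (a - x) * (a - y) := by
  have hx : x ≤ a := by omega
  have hy : y ≤ a := by omega
  zify [hx, hy, h]
  nlinarith [mul_nonneg (Nat.cast_nonneg (α := ℤ) x) (Nat.cast_nonneg (α := ℤ) y)]

private lemma prodA19 {ι : Type*} [DecidableEq ι] (a : ℕ) (s : Finset ι) (b : ι → ℕ)
    (hs : s.Nonempty) (hsum : ∑ i ∈ s, b i ≤ a) :
    a ^ (s.card - 1) * (a - ∑ i ∈ s, b i) ≤ ∏ i ∈ s, (a - b i) := by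
  revert hsum
  induction hs using Finset.Nonempty.cons_induction with
  | singleton i => simp
  | cons i s hi hs ih =>
    intro hsum
    rw [Finset.sum_cons] at hsum
    rw [Finset.sum_cons, Finset.prod_cons, Finset.card_cons]
    have hc : 1 ≤ s.card := Finset.card_pos.mpr hs
    have h1 : a ^ (s.card + 1 - 1) * (a - (b i + ∑ j ∈ s, b j))
        = a ^ (s.card - 1) * (a * (a - (b i + ∑ j ∈ s, b j))) := by
      rw [← mul_assoc, ← pow_succ]
      congr 2
      omega
    rw [h1]
    calc a ^ (s.card - 1) * (a * (a - (b i + ∑ j ∈ s, b j)))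
        ≤ a ^ (s.card - 1) * ((a - b i) * (a - ∑ j ∈ s, b j)) :=
          Nat.mul_le_mul_left _ (key19 a (b i) _ hsum)
      _ = (a - b i) * (a ^ (s.card - 1) * (a - ∑ j ∈ s, b j)) := by ring
      _ ≤ (a - b i) * ∏ j ∈ s, (a - b j) :=
          Nat.mul_le_mul_left _ (ih (by omega))


private lemma quad19 (c u : ℕ) (h1 : 1 ≤ u) (h2 : u < c) : c - 1 ≤ (c - u) * u := by
  obtain ⟨v, hv⟩ : ∃ v, c = u + v + 1 := ⟨c - u - 1, by omega⟩
  subst hv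
  rw [show u + v + 1 - u = v + 1 by omega]
  obtain ⟨w, hw⟩ : ∃ w, u = w + 1 := ⟨u - 1, by omega⟩
  subst hw
  have : (v + 1) * (w + 1) = v * w + v + w + 1 := by ring
  omega

private lemma mono19 (t a : ℕ) (h : t ≤ a) (ht : 1 ≤ t) : (t - 1) * a ≤ t * (a - 1) := by
  have h1 : t * (a - 1) + t = t * a := by rw [← Nat.mul_succ]; congr 1; omega
  have h2 : (t - 1) * a + a = t * a := by rw [← Nat.succ_mul]; congr 1; omega
  omega

/-- The instance of the minimization lemma with sequence `(t, a, …, a)` and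
`s = a`: the minimum of `(t - b₁) ∏_{i=2}^n (a - b_i)` over tuples with
`b₁ < t`, `b_i < a` and `∑ b_i ≤ a` equals `(t - 1)·a^{n-2}`. -/
theorem stmt19 (n t a : ℕ) (hn : 2 ≤ n) (ht : 2 ≤ t) (hta : t < a) :
    IsLeast
      {m : ℕ | ∃ b : Fin n → ℕ, b ⟨0, by omega⟩ < t ∧ (∀ i : Fin n, i ≠ ⟨0, by omega⟩ → b i < a) ∧
        (∑ i : Fin n, b i) ≤ a ∧
        m = (t - b ⟨0, by omega⟩) * ∏ i ∈ Finset.univ.erase ⟨0, by omega⟩, (a - b i)}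
      ((t - 1) * a ^ (n - 2)) := by
  set z0 : Fin n := ⟨0, by omega⟩ with hz0
  set z1 : Fin n := ⟨1, by omega⟩ with hz1
  have hz01 : z1 ≠ z0 := by simp [hz0, hz1, Fin.ext_iff]
  constructor
  · -- membership
    refine ⟨fun i => if i = z0 then t - 1 else if i = z1 then a - t + 1 else 0, ?_, ?_, ?_, ?_⟩
    · simp; omega
    · intro i hi
      simp [hi]
      split <;> omega
    · rw [← Finset.sum_erase_add _ _ (Finset.mem_univ z0)]
      simp only [if_pos rfl]
      rw [← Finset.sum_erase_add _ _ (show z1 ∈ Finset.univ.erase z0 by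
        simp [Finset.mem_erase, hz01])]
      have : ∀ i ∈ (Finset.univ.erase z0).erase z1,
          (if i = z0 then t - 1 else if i = z1 then a - t + 1 else 0) = 0 := by
        intro i hi
        simp only [Finset.mem_erase] at hi
        simp [hi.1, hi.2.1]
      rw [Finset.sum_congr rfl this]
      simp [hz01]
      omega
    · simp only [if_pos rfl]
      rw [← Finset.prod_erase_mul _ _ (show z1 ∈ Finset.univ.erase z0 by
        simp [Finset.mem_erase, hz01])]
      have h1 : ∀ i ∈ (Finset.univ.erase z0).erase z1,
          (a - (if i = z0 then t - 1 else if i = z1 then a - t + 1 else 0)) = a := by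
        intro i hi
        simp only [Finset.mem_erase] at hi
        simp [hi.1, hi.2.1]
      rw [Finset.prod_congr rfl h1, Finset.prod_const]
      have hcard : ((Finset.univ.erase z0).erase z1).card = n - 2 := by
        rw [Finset.card_erase_of_mem (by simp [Finset.mem_erase, hz01]),
          Finset.card_erase_of_mem (by simp)]
        simp only [Finset.card_univ, Fintype.card_fin]
        omega
      rw [hcard]
      simp [hz01]
      have : a - (a - t + 1) = t - 1 := by omega
      rw [this]
      have : t - (t - 1) = 1 := by omega
      rw [this]
      ring
  · -- lower bound
    rintro m ⟨b, hb0, hblt, hsum, rfl⟩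
    set S := Finset.univ.erase z0 with hS
    have hSne : S.Nonempty := ⟨z1, by simp [hS, Finset.mem_erase, hz01]⟩
    have hScard : S.card = n - 1 := by
      rw [hS, Finset.card_erase_of_mem (by simp)]; simp
    have hsplit : b z0 + ∑ i ∈ S, b i = ∑ i : Fin n, b i := by
      rw [hS, Finset.add_sum_erase _ _ (Finset.mem_univ z0)]
    set x := b z0 with hx
    set T := ∑ i ∈ S, b i with hT
    have hxT : x + T ≤ a := by omega
    have hk : 1 ≤ S.card := Finset.card_pos.mpr hSne
    rcases Nat.eq_zero_or_pos x with hx0 | hx1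
    · -- x = 0
      rcases lt_or_eq_of_le (show T ≤ a by omega) with hTa | hTa
      · have hp := prodA19 a S b hSne (by omega)
        have h2 : a ^ (S.card - 1) ≤ ∏ i ∈ S, (a - b i) := by
          calc a ^ (S.card - 1) = a ^ (S.card - 1) * 1 := by ring
            _ ≤ a ^ (S.card - 1) * (a - T) := Nat.mul_le_mul_left _ (by omega)
            _ ≤ ∏ i ∈ S, (a - b i) := hp
        have h3 : (t - 1) * a ^ (n - 2) ≤ t * ∏ i ∈ S, (a - b i) := by
          calc (t - 1) * a ^ (n - 2) ≤ t * a ^ (S.card - 1) := by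
                rw [hScard, show n - 1 - 1 = n - 2 by omega]
                exact Nat.mul_le_mul_right _ (by omega)
            _ ≤ t * ∏ i ∈ S, (a - b i) := Nat.mul_le_mul_left _ h2
        rw [hx0]
        simpa using h3
      · -- T = a : pick j with b j ≥ 1
        have hex : ∃ j ∈ S, 1 ≤ b j := by
          by_contra h
          push_neg at h
          have : T = 0 := Finset.sum_eq_zero (fun i hi => by have := h i hi; omega)
          omega
        obtain ⟨j, hjS, hj1⟩ := hex
        have hja : b j < a := hblt j (by rw [hS] at hjS; exact (Finset.mem_erase.mp hjS).1)
        have hSene : (S.erase j).Nonempty := by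
          rw [Finset.nonempty_iff_ne_empty]
          intro h
          have : S = {j} := by
            rcases (Finset.erase_eq_empty_iff S j).mp h with h' | h'
            · exact absurd h' (Finset.nonempty_iff_ne_empty.mp hSne)
            · exact h'
          rw [this] at hT
          simp at hT
          omega
        have hsumE : ∑ i ∈ S.erase j, b i = T - b j := by
          rw [hT, ← Finset.add_sum_erase _ _ hjS]
          omega
        have hp := prodA19 a (S.erase j) b hSene (by omega)
        rw [hsumE] at hp
        have hcardE : (S.erase j).card = S.card - 1 := Finset.card_erase_of_mem hjS
        have hprod : (a - b j) * ∏ i ∈ S.erase j, (a - b i) = ∏ i ∈ S, (a - b i) :=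
          Finset.mul_prod_erase S (fun i => a - b i) hjS
        have hk2 : 2 ≤ S.card := by
          have := Finset.card_pos.mpr hSene
          omega
        have hbound : (a - 1) * a ^ (S.card - 2) ≤ ∏ i ∈ S, (a - b i) := by
          rw [← hprod]
          have h1 : a ^ (S.card - 2) * (a - (T - b j)) ≤ ∏ i ∈ S.erase j, (a - b i) := by
            rwa [show (S.erase j).card - 1 = S.card - 2 by omega] at hp
          have h2 : a - (T - b j) = b j := by omega
          rw [h2] at h1
          calc (a - 1) * a ^ (S.card - 2) ≤ (a - b j) * (a ^ (S.card - 2) * b j) := by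
                have : (a - 1) * 1 ≤ (a - b j) * b j := by
                  rw [mul_one]; exact quad19 a (b j) hj1 hja
                calc (a - 1) * a ^ (S.card - 2) = ((a-1) * 1) * a ^ (S.card - 2) := by ring
                  _ ≤ ((a - b j) * b j) * a ^ (S.card - 2) := Nat.mul_le_mul_right _ this
                  _ = (a - b j) * (a ^ (S.card - 2) * b j) := by ring
            _ ≤ (a - b j) * ∏ i ∈ S.erase j, (a - b i) := Nat.mul_le_mul_left _ h1
        rw [hx0]
        have hfin : (t - 1) * a ^ (n - 2) ≤ t * ((a - 1) * a ^ (S.card - 2)) := by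
          have hn2 : n - 2 = S.card - 2 + 1 := by omega
          rw [hn2, pow_succ]
          calc (t - 1) * (a ^ (S.card - 2) * a) = ((t - 1) * a) * a ^ (S.card - 2) := by ring
            _ ≤ (t * (a - 1)) * a ^ (S.card - 2) :=
                Nat.mul_le_mul_right _ (mono19 t a hta.le (by omega))
            _ = t * ((a - 1) * a ^ (S.card - 2)) := by ring
        calc (t - 1) * a ^ (n - 2) ≤ t * ((a - 1) * a ^ (S.card - 2)) := hfin
          _ ≤ t * ∏ i ∈ S, (a - b i) := Nat.mul_le_mul_left _ hbound
          _ = (t - 0) * ∏ i ∈ S, (a - b i) := by rw [Nat.sub_zero]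
    · -- x ≥ 1
      have hp := prodA19 a S b hSne (by omega)
      have h2 : a - T ≥ x := by omega
      have hxt : x ≤ t - 1 := by omega
      calc (t - 1) * a ^ (n - 2)
          = (t - 1) * 1 * a ^ (n - 2) := by ring
        _ ≤ ((t - x) * x) * a ^ (n - 2) := by
            refine Nat.mul_le_mul_right _ ?_
            rw [mul_one]
            exact quad19 t x hx1 hb0
        _ = (t - x) * (x * a ^ (n - 2)) := by ring
        _ ≤ (t - x) * (a ^ (S.card - 1) * (a - T)) := by
            apply Nat.mul_le_mul_left
            have : S.card - 1 = n - 2 := by omega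
            rw [this]
            calc x * a ^ (n - 2) = a ^ (n-2) * x := by ring
              _ ≤ a ^ (n-2) * (a - T) := Nat.mul_le_mul_left _ h2
        _ ≤ (t - x) * ∏ i ∈ S, (a - b i) := Nat.mul_le_mul_left _ hp
end
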